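/- arXiv:2009.12774 — 4 statements merged into one kernel-verified Lean document; each statement's English description precedes it below -/
import Mathlib

section
/- Let κ₁ ≤ κ₂ ≤ ... ≤ κₙ be a non-decreasing finite sequence of uncountable regular cardinals, and for each i let Uᵢ be a normal measure on κᵢ. Let ν < κ₁ be an ordinal, let Aᵢ ∈ Uᵢ for each i, and let F be a function assigning to every strictly increasing n-tuple ⟨a₁,...,aₙ⟩ with aᵢ ∈ Aᵢ an ordinal below ν. Then there exist sets Hᵢ ⊆ Aᵢ with Hᵢ ∈ Uᵢ such that F is constant on the set of strictly increasing n-tuples ⟨a₁,...,aₙ⟩ with aᵢ ∈ Hᵢ. -/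
/-- `κ` is (the ordinal of) an uncountable regular cardinal. -/
def IsUncountableRegularCard (κ : Ordinal) : Prop :=
  Cardinal.aleph0 < κ.card ∧ κ.card.IsRegular ∧ κ.card.ord = κ

/-- `U` is a normal measure on `κ`: an ultrafilter on the subsets of `κ` (identified with
`Set.Iio κ`) which is `κ`-complete, closed under diagonal intersections, and nonprincipal. -/
def IsNormalMeasure (κ : Ordinal) (U : Set (Set Ordinal)) : Prop :=
  (∀ A ∈ U, A ⊆ Set.Iio κ) ∧
  Set.Iio κ ∈ U ∧
  (∅ : Set Ordinal) ∉ U ∧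
  (∀ A B : Set Ordinal, A ∈ U → A ⊆ B → B ⊆ Set.Iio κ → B ∈ U) ∧
  (∀ A : Set Ordinal, A ⊆ Set.Iio κ → A ∈ U ∨ Set.Iio κ \ A ∈ U) ∧
  (∀ γ, γ < κ → ∀ s : Ordinal → Set Ordinal, (∀ i, i < γ → s i ∈ U) →
    (Set.Iio κ ∩ ⋂ i ∈ Set.Iio γ, s i) ∈ U) ∧
  (∀ s : Ordinal → Set Ordinal, (∀ α, α < κ → s α ∈ U) →
    {β | β < κ ∧ ∀ α, α < β → β ∈ s α} ∈ U) ∧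
  (∀ α : Ordinal, ({α} : Set Ordinal) ∉ U)

lemma nm_omega_lt {κ : Ordinal} (hκ : IsUncountableRegularCard κ) : Ordinal.omega0 < κ := by
  rw [← hκ.2.2, ← Cardinal.ord_aleph0]
  exact Cardinal.ord_lt_ord.mpr hκ.1

lemma nm_isLimit {κ : Ordinal} (hκ : IsUncountableRegularCard κ) : Order.IsSuccLimit κ := by
  rw [← hκ.2.2]
  exact Cardinal.isSuccLimit_ord hκ.1.le

/-- Pairwise intersection. -/
lemma nm_inter {κ : Ordinal} {U : Set (Set Ordinal)} (h : IsNormalMeasure κ U)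
    (hκ : IsUncountableRegularCard κ) {A B : Set Ordinal} (hA : A ∈ U) (hB : B ∈ U) :
    A ∩ B ∈ U := by
  classical
  have h2 : (2 : Ordinal) < κ := lt_trans (Ordinal.nat_lt_omega0 2) (nm_omega_lt hκ)
  set s : Ordinal → Set Ordinal := fun i => if i = 0 then A else B with hs
  have hmem : ∀ i, i < (2 : Ordinal) → s i ∈ U := by
    intro i _
    by_cases hi : i = 0 <;> simp [hs, hi, hA, hB]
  have := h.2.2.2.2.2.1 2 h2 s hmem
  have heq : (Set.Iio κ ∩ ⋂ i ∈ Set.Iio (2 : Ordinal), s i) = A ∩ B := by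
    ext x
    simp only [Set.mem_inter_iff, Set.mem_iInter, Set.mem_Iio]
    constructor
    · rintro ⟨hx, hall⟩
      refine ⟨?_, ?_⟩
      · have := hall 0 (by norm_num)
        simpa [hs] using this
      · have := hall 1 (by norm_num)
        simpa [hs] using this
    · rintro ⟨hxA, hxB⟩
      refine ⟨h.1 A hA hxA, ?_⟩
      intro i _
      by_cases hi : i = 0 <;> simp [hs, hi, hxA, hxB]
  rwa [heq] at this

/-- Final segments are in the measure. -/
lemma nm_Ioo {κ : Ordinal} {U : Set (Set Ordinal)} (h : IsNormalMeasure κ U)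
    (hκ : IsUncountableRegularCard κ) {α : Ordinal} (hα : α < κ) :
    Set.Ioo α κ ∈ U := by
  set s : Ordinal → Set Ordinal := fun ξ => Set.Iio κ \ {ξ} with hs
  have hsucc : α + 1 < κ := by
    rw [Ordinal.add_one_eq_succ]
    exact (nm_isLimit hκ).succ_lt hα
  have hmem : ∀ ξ, ξ < α + 1 → s ξ ∈ U := by
    intro ξ hξ
    have hξκ : ξ < κ := lt_trans hξ hsucc
    have hsub : ({ξ} : Set Ordinal) ⊆ Set.Iio κ := by
      intro x hx; simp only [Set.mem_singleton_iff] at hx; simpa [hx]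
    rcases h.2.2.2.2.1 {ξ} hsub with h1 | h1
    · exact absurd h1 (h.2.2.2.2.2.2.2 ξ)
    · exact h1
  have := h.2.2.2.2.2.1 (α + 1) hsucc s hmem
  have heq : (Set.Iio κ ∩ ⋂ i ∈ Set.Iio (α + 1), s i) = Set.Ioo α κ := by
    ext x
    simp only [Set.mem_inter_iff, Set.mem_iInter, Set.mem_Iio, Set.mem_Ioo, hs,
      Set.mem_diff, Set.mem_singleton_iff]
    constructor
    · rintro ⟨hx, hall⟩
      refine ⟨?_, hx⟩
      by_contra hle
      push_neg at hle
      exact (hall x (lt_of_le_of_lt hle (lt_add_one α))).2 rfl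
    · rintro ⟨hax, hx⟩
      refine ⟨hx, fun i hi => ⟨hx, ?_⟩⟩
      rw [Ordinal.add_one_eq_succ, Order.lt_succ_iff] at hi
      exact fun hxi => (not_lt.mpr hi) (hxi ▸ hax)
  rwa [heq] at this

lemma nm_nonempty {κ : Ordinal} {U : Set (Set Ordinal)} (h : IsNormalMeasure κ U)
    {B : Set Ordinal} (hB : B ∈ U) : B.Nonempty := by
  by_contra hne
  rw [Set.not_nonempty_iff_eq_empty] at hne
  rw [hne] at hB
  exact h.2.2.1 hB

/-- Rowbottom partition property for one variable. -/
lemma nm_part {κ : Ordinal} {U : Set (Set Ordinal)} (h : IsNormalMeasure κ U)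
    (hκ : IsUncountableRegularCard κ) {ν : Ordinal} (hν : ν < κ) {A : Set Ordinal}
    (hA : A ∈ U) (g : Ordinal → Ordinal) (hg : ∀ a ∈ A, g a < ν) :
    ∃ B : Set Ordinal, B ⊆ A ∧ B ∈ U ∧ ∃ c, c < ν ∧ ∀ a ∈ B, g a = c := by
  by_cases hex : ∃ ξ, ξ < ν ∧ {a ∈ A | g a = ξ} ∈ U
  · obtain ⟨ξ, hξν, hξ⟩ := hex
    exact ⟨_, Set.sep_subset _ _, hξ, ξ, hξν, fun a ha => ha.2⟩
  · exfalso
    push_neg at hex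
    set s : Ordinal → Set Ordinal := fun ξ => Set.Iio κ \ {a ∈ A | g a = ξ} with hs
    have hmem : ∀ ξ, ξ < ν → s ξ ∈ U := by
      intro ξ hξ
      have hsub : {a ∈ A | g a = ξ} ⊆ Set.Iio κ := (Set.sep_subset _ _).trans (h.1 A hA)
      rcases h.2.2.2.2.1 _ hsub with h1 | h1
      · exact absurd h1 (hex ξ hξ)
      · exact h1
    have hT := h.2.2.2.2.2.1 ν hν s hmem
    have hAT := nm_inter h hκ hA hT
    obtain ⟨a, haA, -, haT⟩ := nm_nonempty h hAT
    have hgν := hg a haA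
    have := haT
    rw [Set.mem_iInter₂] at this
    have := this (g a) hgν
    rw [hs] at this
    exact this.2 ⟨haA, rfl⟩

lemma cons_strictMono {n : ℕ} {α : Ordinal} {a : Fin n → Ordinal} (ha : StrictMono a)
    (hα : ∀ i, α < a i) : StrictMono (Fin.cons α a : Fin (n + 1) → Ordinal) := by
  intro i j hij
  induction j using Fin.cases with
  | zero => exact absurd hij (by simp)
  | succ k =>
      induction i using Fin.cases with
      | zero => simpa using hα k
      | succ l =>
          simp only [Fin.cons_succ]
          exact ha (Fin.succ_lt_succ_iff.mp hij)

/-- The main lemma, proved by induction on `n`. -/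
lemma stabprod_aux : ∀ (n : ℕ) (κ : Fin n → Ordinal), Monotone κ →
    (∀ i, IsUncountableRegularCard (κ i)) →
    ∀ (U : Fin n → Set (Set Ordinal)), (∀ i, IsNormalMeasure (κ i) (U i)) →
    ∀ (ν : Ordinal), (∀ i, ν < κ i) →
    ∀ (A : Fin n → Set Ordinal), (∀ i, A i ∈ U i) →
    ∀ (F : (Fin n → Ordinal) → Ordinal),
    (∀ a : Fin n → Ordinal, StrictMono a → (∀ i, a i ∈ A i) → F a < ν) →
    ∃ H : Fin n → Set Ordinal, (∀ i, H i ⊆ A i) ∧ (∀ i, H i ∈ U i) ∧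
      ∃ c : Ordinal, c < ν ∧
        ∀ a : Fin n → Ordinal, StrictMono a → (∀ i, a i ∈ H i) → F a = c := by
  intro n
  induction n with
  | zero =>
      intro κ _ _ U _ ν _ A hA F hF
      refine ⟨A, fun i => subset_rfl, hA,
        F Fin.elim0, hF Fin.elim0 (fun a => a.elim0) (fun i => i.elim0), fun a _ _ => ?_⟩
      have : a = Fin.elim0 := funext fun i => i.elim0
      rw [this]
  | succ n ih =>
      intro κ hmono hκ U hU ν hν A hA F hF
      classical
      have hA0sub : A 0 ⊆ Set.Iio (κ 0) := (hU 0).1 _ (hA 0)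
      have key : ∀ α ∈ A 0, ∃ H' : Fin n → Set Ordinal,
          (∀ i, H' i ⊆ A i.succ ∩ Set.Ioo α (κ i.succ)) ∧ (∀ i, H' i ∈ U i.succ) ∧
          ∃ c, c < ν ∧ ∀ a' : Fin n → Ordinal, StrictMono a' → (∀ i, a' i ∈ H' i) →
            F (Fin.cons α a') = c := by
        intro α hα
        have hακ : ∀ i : Fin n, α < κ i.succ :=
          fun i => lt_of_lt_of_le (hA0sub hα) (hmono (Fin.zero_le _))
        refine ih (fun i => κ i.succ) (fun i j hij => hmono (Fin.succ_le_succ_iff.mpr hij))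
          (fun i => hκ _) (fun i => U i.succ) (fun i => hU _) ν (fun i => hν i.succ)
          (fun i => A i.succ ∩ Set.Ioo α (κ i.succ))
          (fun i => nm_inter (hU i.succ) (hκ i.succ) (hA i.succ)
            (nm_Ioo (hU i.succ) (hκ i.succ) (hακ i)))
          (fun a' => F (Fin.cons α a')) ?_
        intro a' ha' hm
        refine hF _ (cons_strictMono ha' (fun i => (hm i).2.1)) ?_
        intro i
        induction i using Fin.cases with
        | zero => simpa using hα
        | succ j => simpa using (hm j).1
      choose! H' hH'sub hH'mem c hcν hc using key
      set s : Fin n → Ordinal → Set Ordinal :=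
        fun i α => if α ∈ A 0 then H' α i else Set.Iio (κ i.succ) with hsdef
      have hsU : ∀ i : Fin n, ∀ α, α < κ i.succ → s i α ∈ U i.succ := by
        intro i α _
        by_cases hα : α ∈ A 0
        · simpa [hsdef, hα] using hH'mem α hα i
        · simpa [hsdef, hα] using (hU i.succ).2.1
      have hD : ∀ i : Fin n,
          {β | β < κ i.succ ∧ ∀ α, α < β → β ∈ s i α} ∈ U i.succ :=
        fun i => (hU i.succ).2.2.2.2.2.2.1 (s i) (hsU i)
      obtain ⟨B, hBsub, hBU, c₀, hc₀ν, hc₀⟩ :=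
        nm_part (hU 0) (hκ 0) (hν 0) (hA 0) c (fun α hα => hcν α hα)
      refine ⟨Fin.cons B (fun i => A i.succ ∩
        {β | β < κ i.succ ∧ ∀ α, α < β → β ∈ s i α}), ?_, ?_, c₀, hc₀ν, ?_⟩
      · intro i
        induction i using Fin.cases with
        | zero => simp only [Fin.cons_zero]; exact hBsub
        | succ j => simp only [Fin.cons_succ]; exact Set.inter_subset_left
      · intro i
        induction i using Fin.cases with
        | zero => simp only [Fin.cons_zero]; exact hBU
        | succ j =>
            simpa using nm_inter (hU j.succ) (hκ j.succ) (hA j.succ) (hD j)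
      · intro a hmon hmem
        have h0 : a 0 ∈ B := by simpa using hmem 0
        have hA0 : a 0 ∈ A 0 := hBsub h0
        have htail : ∀ i : Fin n, a i.succ ∈ H' (a 0) i := by
          intro i
          have hi := hmem i.succ
          rw [Fin.cons_succ] at hi
          have h01 : a 0 < a i.succ := hmon (Fin.succ_pos i)
          have := hi.2.2 (a 0) h01
          rw [hsdef] at this
          simpa [hA0] using this
        have htm : StrictMono (Fin.tail a) :=
          fun i j hij => hmon (Fin.succ_lt_succ_iff.mpr hij)
        have hval : F (Fin.cons (a 0) (Fin.tail a)) = c (a 0) :=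
          hc (a 0) hA0 (Fin.tail a) htm (fun i => htail i)
        rw [Fin.cons_self_tail] at hval
        rw [hval, hc₀ (a 0) h0]

/-- Lemma 2.2 (`stabprod`): a function on the increasing products of measure-one sets into an
ordinal `ν` below the least of the measurables is constant on an increasing product of
measure-one subsets. -/
theorem stmt_0 (n : ℕ) (hn : 0 < n) (κ : Fin n → Ordinal) (hκmono : Monotone κ)
    (hκ : ∀ i, IsUncountableRegularCard (κ i))
    (U : Fin n → Set (Set Ordinal)) (hU : ∀ i, IsNormalMeasure (κ i) (U i))
    (ν : Ordinal) (hν : ν < κ ⟨0, hn⟩)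
    (A : Fin n → Set Ordinal) (hA : ∀ i, A i ∈ U i)
    (F : (Fin n → Ordinal) → Ordinal)
    (hF : ∀ a : Fin n → Ordinal, StrictMono a → (∀ i, a i ∈ A i) → F a < ν) :
    ∃ H : Fin n → Set Ordinal, (∀ i, H i ⊆ A i) ∧ (∀ i, H i ∈ U i) ∧
      ∃ c : Ordinal, ∀ a : Fin n → Ordinal, StrictMono a → (∀ i, a i ∈ H i) → F a = c := by
  have hν' : ∀ i, ν < κ i := fun i =>
    lt_of_lt_of_le hν (hκmono (show (⟨0, hn⟩ : Fin n) ≤ i by simp [Fin.le_def]))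
  obtain ⟨H, h1, h2, c, _, h3⟩ := stabprod_aux n κ hκmono hκ U hU ν hν' A hA F hF
  exact ⟨H, h1, h2, c, h3⟩
end

section
/- Let κ₁ ≤ κ₂ ≤ ... ≤ κₙ be a non-decreasing finite sequence of uncountable regular cardinals, for each i let Uᵢ be a normal measure on κᵢ, and let Aᵢ ∈ Uᵢ. Let λ < κ₁ and let ⟨F_j : j < λ⟩ be a family of functions, where each F_j assigns to every strictly increasing n-tuple ⟨a₁,...,aₙ⟩ with aᵢ ∈ Aᵢ an ordinal below some ν_j < κ₁. Then there exist sets Hᵢ ⊆ Aᵢ with Hᵢ ∈ Uᵢ such that every F_j (j < λ) is simultaneously constant on the set of strictly increasing n-tuples ⟨a₁,...,aₙ⟩ with aᵢ ∈ Hᵢ. -/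
section Helpers
variable {κ : Ordinal} {U : Set (Set Ordinal)}

lemma omega_lt' (hκ : IsUncountableRegularCard κ) : Ordinal.omega0 < κ := by
  rw [← hκ.2.2, ← Cardinal.ord_aleph0]
  exact Cardinal.ord_lt_ord.mpr hκ.1

lemma isLimit' (hκ : IsUncountableRegularCard κ) : Order.IsSuccLimit κ := by
  rw [← hκ.2.2]; exact Cardinal.isSuccLimit_ord hκ.1.le

lemma mem_nonempty' (hU : IsNormalMeasure κ U) {S : Set Ordinal} (hS : S ∈ U) :
    S.Nonempty := by
  rcases Set.eq_empty_or_nonempty S with h | h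
  · exact absurd (h ▸ hS) hU.2.2.1
  · exact h

lemma inter_mem' (hκ : IsUncountableRegularCard κ) (hU : IsNormalMeasure κ U)
    {A B : Set Ordinal} (hA : A ∈ U) (hB : B ∈ U) : A ∩ B ∈ U := by
  have h2 : (2 : Ordinal) < κ := by
    refine lt_trans ?_ (omega_lt' hκ)
    exact_mod_cast Ordinal.nat_lt_omega0 2
  have key := hU.2.2.2.2.2.1 2 h2 (fun i => if i = 0 then A else B) ?_
  · refine hU.2.2.2.1 _ _ key ?_ ?_
    · intro x hx
      obtain ⟨hx1, hx2⟩ := hx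
      rw [Set.mem_iInter₂] at hx2
      have h0 := hx2 0 (by norm_num)
      have h1 := hx2 1 (by norm_num)
      simp only [if_pos rfl] at h0
      rw [if_neg one_ne_zero] at h1
      exact ⟨h0, h1⟩
    · exact fun x hx => hU.1 A hA hx.1
  · intro i _
    by_cases h : i = 0 <;> simp [h, hA, hB]

lemma biinter_mem' (hκ : IsUncountableRegularCard κ) (hU : IsNormalMeasure κ U)
    {γ : Ordinal} {s : Ordinal → Set Ordinal} {T : Set Ordinal} (hγ : γ < κ)
    (hs : ∀ i, i < γ → s i ∈ U) (hT : T ∈ U) :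
    (T ∩ ⋂ i ∈ Set.Iio γ, s i) ∈ U := by
  have key := hU.2.2.2.2.2.1 γ hγ s hs
  have h2 := inter_mem' hκ hU hT key
  refine hU.2.2.2.1 _ _ h2 ?_ ?_
  · exact fun x hx => ⟨hx.1, hx.2.2⟩
  · exact fun x hx => hU.1 T hT hx.1

lemma diff_Iio_mem' (hκ : IsUncountableRegularCard κ) (hU : IsNormalMeasure κ U)
    {β : Ordinal} (hβ : β < κ) : Set.Iio κ \ Set.Iio β ∈ U := by
  have key := hU.2.2.2.2.2.1 β hβ (fun i => Set.Iio κ \ {i}) ?_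
  · refine hU.2.2.2.1 _ _ key ?_ ?_
    · intro x hx
      obtain ⟨hx1, hx2⟩ := hx
      rw [Set.mem_iInter₂] at hx2
      refine ⟨hx1, fun hlt => ?_⟩
      exact (hx2 x hlt).2 rfl
    · exact fun x hx => hx.1
  · intro i hi
    rcases hU.2.2.2.2.1 {i} (by intro x hx; rw [Set.mem_singleton_iff] at hx; exact hx ▸ hi.trans hβ) with h | h
    · exact absurd h (hU.2.2.2.2.2.2.2 i)
    · exact h

end Helpers

section Helpers2
variable {κ : Ordinal} {U : Set (Set Ordinal)}

lemma exists_gt' (hκ : IsUncountableRegularCard κ) (hU : IsNormalMeasure κ U)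
    {A : Set Ordinal} (hA : A ∈ U) {β : Ordinal} (hβ : β < κ) : ∃ a ∈ A, β < a := by
  have hβ1 : β + 1 < κ := by
    have := (isLimit' hκ).succ_lt hβ
    rwa [Ordinal.add_one_eq_succ]
  have key := inter_mem' hκ hU hA (diff_Iio_mem' hκ hU hβ1)
  obtain ⟨a, ha⟩ := mem_nonempty' hU key
  refine ⟨a, ha.1, ?_⟩
  have := ha.2.2
  rw [Set.mem_Iio, not_lt] at this
  exact lt_of_lt_of_le (lt_add_one β) this

lemma const_on' (hκ : IsUncountableRegularCard κ) (hU : IsNormalMeasure κ U)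
    {A : Set Ordinal} (hA : A ∈ U) {g : Ordinal → Ordinal} {ν : Ordinal} (hν : ν < κ)
    (hg : ∀ α ∈ A, g α < ν) :
    ∃ c B, B ∈ U ∧ B ⊆ A ∧ ∀ α ∈ B, g α = c := by
  by_contra hcon
  push_neg at hcon
  have hAsub : A ⊆ Set.Iio κ := hU.1 A hA
  have hfib : ∀ ξ, ξ < ν → Set.Iio κ \ {α ∈ A | g α = ξ} ∈ U := by
    intro ξ _
    rcases hU.2.2.2.2.1 {α ∈ A | g α = ξ} (fun x hx => hAsub hx.1) with h | h
    · obtain ⟨α, hαm, hne⟩ := hcon ξ _ h (fun α hα => hα.1)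
      exact (hne hαm.2).elim
    · exact h
  have key := biinter_mem' hκ hU hν
    (s := fun ξ => Set.Iio κ \ {α ∈ A | g α = ξ}) (fun i hi => hfib i hi) hA
  obtain ⟨α, hα⟩ := mem_nonempty' hU key
  have hαA : α ∈ A := hα.1
  have h1 := hα.2
  rw [Set.mem_iInter₂] at h1
  have h2 := h1 (g α) (hg α hαA)
  exact h2.2 ⟨hαA, rfl⟩

end Helpers2

lemma strictMono_cons {n : ℕ} {a : Fin (n + 1) → Ordinal} {α : Ordinal}
    (hα : α < a 0) (ha : StrictMono a) :
    StrictMono (Fin.cons α a : Fin (n + 2) → Ordinal) := by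
  rw [Fin.strictMono_iff_lt_succ]
  intro i
  induction i using Fin.cases with
  | zero => simpa using hα
  | succ i =>
    simp only [← Fin.succ_castSucc, Fin.cons_succ]
    exact ha (Fin.castSucc_lt_succ (i := i))

lemma exists_tuple' : ∀ (n : ℕ) (κ : Fin (n+1) → Ordinal), Monotone κ →
    (∀ i, IsUncountableRegularCard (κ i)) →
    ∀ (U : Fin (n+1) → Set (Set Ordinal)), (∀ i, IsNormalMeasure (κ i) (U i)) →
    ∀ (A : Fin (n+1) → Set Ordinal), (∀ i, A i ∈ U i) →
    ∃ a : Fin (n+1) → Ordinal, StrictMono a ∧ ∀ i, a i ∈ A i := by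
  intro n
  induction n with
  | zero =>
    intro κ _ _ U hU A hA
    obtain ⟨x, hx⟩ := mem_nonempty' (hU 0) (hA 0)
    refine ⟨fun _ => x, fun i j h => absurd (Fin.lt_def.mp h) (by omega), fun i => ?_⟩
    have hi : i = 0 := Fin.eq_of_val_eq (by omega)
    rw [hi]
    exact hx
  | succ m ih =>
    intro κ hκmono hκ U hU A hA
    obtain ⟨x, hx⟩ := mem_nonempty' (hU 0) (hA 0)
    have hx0 : x < κ 0 := hU 0 |>.1 _ (hA 0) hx
    set A' : Fin (m+1) → Set Ordinal :=
      fun i => A i.succ ∩ (Set.Iio (κ i.succ) \ Set.Iio (x + 1)) with hA'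
    have hA'mem : ∀ i, A' i ∈ U i.succ := by
      intro i
      have hxκ : x + 1 < κ i.succ := by
        refine lt_of_lt_of_le ?_ (hκmono (Fin.zero_le i.succ))
        have := (isLimit' (hκ 0)).succ_lt hx0
        rwa [Ordinal.add_one_eq_succ]
      exact inter_mem' (hκ i.succ) (hU i.succ) (hA i.succ)
        (diff_Iio_mem' (hκ i.succ) (hU i.succ) hxκ)
    obtain ⟨a, hamono, ha⟩ := ih (fun i => κ i.succ)
      (hκmono.comp (Fin.strictMono_succ.monotone))
      (fun i => hκ i.succ) (fun i => U i.succ) (fun i => hU i.succ) A' hA'mem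
    have hxa : x < a 0 := by
      have := (ha 0).2.2
      rw [Set.mem_Iio, not_lt] at this
      exact lt_of_lt_of_le (lt_add_one x) this
    refine ⟨Fin.cons x a, strictMono_cons hxa hamono, fun i => ?_⟩
    induction i using Fin.cases with
    | zero => simpa using hx
    | succ i => simpa using (ha i).1

theorem aux : ∀ (n : ℕ) (κ : Fin (n+1) → Ordinal), Monotone κ →
    (∀ i, IsUncountableRegularCard (κ i)) →
    ∀ (U : Fin (n+1) → Set (Set Ordinal)), (∀ i, IsNormalMeasure (κ i) (U i)) →
    ∀ (A : Fin (n+1) → Set Ordinal), (∀ i, A i ∈ U i) →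
    ∀ (lam : Ordinal), lam < κ 0 →
    ∀ (F : Ordinal → (Fin (n+1) → Ordinal) → Ordinal) (ν : Ordinal → Ordinal),
    (∀ j, j < lam → ν j < κ 0) →
    (∀ j, j < lam → ∀ a : Fin (n+1) → Ordinal, StrictMono a →
      (∀ i, a i ∈ A i) → F j a < ν j) →
    ∃ H : Fin (n+1) → Set Ordinal, (∀ i, H i ⊆ A i) ∧ (∀ i, H i ∈ U i) ∧
      ∀ j, j < lam → ∃ c : Ordinal,
        ∀ a : Fin (n+1) → Ordinal, StrictMono a → (∀ i, a i ∈ H i) → F j a = c := by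
  intro n
  induction n with
  | zero =>
    intro κ hκmono hκ U hU A hA lam hlam F ν hν hF
    have hg : ∀ j, j < lam → ∀ α ∈ A 0, F j (fun _ => α) < ν j := by
      intro j hj α hα
      refine hF j hj _ (fun i j h => absurd (Fin.lt_def.mp h) (by omega)) ?_
      intro i
      have hi : i = 0 := Fin.eq_of_val_eq (by omega)
      rw [hi]; exact hα
    have hcB : ∀ j, ∃ c B, B ∈ U 0 ∧ B ⊆ A 0 ∧
        (j < lam → ∀ α ∈ B, F j (fun _ => α) = c) := by
      intro j
      by_cases hj : j < lam
      · obtain ⟨c, B, hB1, hB2, hB3⟩ := const_on' (hκ 0) (hU 0) (hA 0) (hν j hj)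
          (g := fun α => F j (fun _ => α)) (hg j hj)
        exact ⟨c, B, hB1, hB2, fun _ => hB3⟩
      · exact ⟨0, A 0, hA 0, le_refl _, fun h => absurd h hj⟩
    choose cc B hBmem hBsub hBconst using hcB
    have hH0mem : (A 0 ∩ ⋂ j ∈ Set.Iio lam, B j) ∈ U 0 :=
      biinter_mem' (hκ 0) (hU 0) hlam (fun j _ => hBmem j) (hA 0)
    refine ⟨fun _ => A 0 ∩ ⋂ j ∈ Set.Iio lam, B j, ?_, ?_, ?_⟩
    · intro i
      have hi : i = 0 := Fin.eq_of_val_eq (by omega)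
      rw [hi]; exact fun x hx => hx.1
    · intro i
      have hi : i = 0 := Fin.eq_of_val_eq (by omega)
      rw [hi]; exact hH0mem
    · intro j hj
      refine ⟨cc j, ?_⟩
      intro a _ hamem
      have ha0 := hamem 0
      have hae : a = fun _ => a 0 := by
        funext i
        have hi : i = 0 := Fin.eq_of_val_eq (by omega)
        rw [hi]
      have hB : a 0 ∈ B j := by
        have := ha0.2; rw [Set.mem_iInter₂] at this; exact this j hj
      rw [hae]
      exact hBconst j hj (a 0) hB
  | succ m ih =>
    intro κ hκmono hκ U hU A hA lam hlam F ν hν hF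
    set κ' : Fin (m+1) → Ordinal := fun i => κ i.succ with hκ'
    have hκ'mono : Monotone κ' := hκmono.comp Fin.strictMono_succ.monotone
    have h0le : ∀ i : Fin (m+1), κ 0 ≤ κ i.succ := fun i => hκmono (Fin.zero_le _)
    have key : ∀ α : Ordinal, ∃ (Ht : Fin (m+1) → Set Ordinal) (ct : Ordinal → Ordinal),
        (∀ i, Ht i ∈ U i.succ) ∧ (α ∈ A 0 →
          (∀ i, Ht i ⊆ A i.succ ∩ (Set.Iio (κ i.succ) \ Set.Iio (α+1))) ∧
          ∀ j, j < lam → ct j < ν j ∧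
            ∀ a : Fin (m+1) → Ordinal, StrictMono a → (∀ i, a i ∈ Ht i) →
              F j (Fin.cons α a) = ct j) := by
      intro α
      by_cases hα : α ∈ A 0
      · have hακ : α < κ 0 := (hU 0).1 _ (hA 0) hα
        have hα1 : ∀ i : Fin (m+1), α + 1 < κ i.succ := by
          intro i
          refine lt_of_lt_of_le ?_ (h0le i)
          have := (isLimit' (hκ 0)).succ_lt hακ
          rwa [Ordinal.add_one_eq_succ]
        set A' : Fin (m+1) → Set Ordinal :=
          fun i => A i.succ ∩ (Set.Iio (κ i.succ) \ Set.Iio (α+1)) with hA'def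
        have hA'mem : ∀ i, A' i ∈ U i.succ := fun i =>
          inter_mem' (hκ i.succ) (hU i.succ) (hA i.succ)
            (diff_Iio_mem' (hκ i.succ) (hU i.succ) (hα1 i))
        have hlam' : lam < κ' 0 := lt_of_lt_of_le hlam (h0le 0)
        have hν' : ∀ j, j < lam → ν j < κ' 0 := fun j hj =>
          lt_of_lt_of_le (hν j hj) (h0le 0)
        have hF' : ∀ j, j < lam → ∀ a : Fin (m+1) → Ordinal, StrictMono a →
            (∀ i, a i ∈ A' i) → F j (Fin.cons α a) < ν j := by
          intro j hj a ha hamem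
          have hαa : α < a 0 := by
            have := (hamem 0).2.2
            rw [Set.mem_Iio, not_lt] at this
            exact lt_of_lt_of_le (lt_add_one α) this
          refine hF j hj _ (strictMono_cons hαa ha) ?_
          intro i
          induction i using Fin.cases with
          | zero => simpa using hα
          | succ i => simpa using (hamem i).1
        obtain ⟨H', hH'sub, hH'mem, hH'hom⟩ := ih κ' hκ'mono (fun i => hκ i.succ)
          (fun i => U i.succ) (fun i => hU i.succ) A' hA'mem lam hlam'
          (fun j a => F j (Fin.cons α a)) ν hν' hF'
        have hct : ∀ j, ∃ c, j < lam → (c < ν j ∧ ∀ a, StrictMono a →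
            (∀ i, a i ∈ H' i) → F j (Fin.cons α a) = c) := by
          intro j
          by_cases hj : j < lam
          · obtain ⟨c, hc⟩ := hH'hom j hj
            refine ⟨c, fun _ => ⟨?_, hc⟩⟩
            obtain ⟨a, hamono, hamem⟩ := exists_tuple' m κ' hκ'mono (fun i => hκ i.succ)
              (fun i => U i.succ) (fun i => hU i.succ) H' hH'mem
            rw [← hc a hamono hamem]
            exact hF' j hj a hamono (fun i => hH'sub i (hamem i))
          · exact ⟨0, fun h => absurd h hj⟩
        choose ct hctspec using hct
        exact ⟨H', ct, hH'mem, fun _ => ⟨hH'sub, fun j hj => hctspec j hj⟩⟩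
      · exact ⟨fun i => Set.Iio (κ i.succ), fun _ => 0,
          fun i => (hU i.succ).2.1, fun h => absurd h hα⟩
    choose Ht ct hHtmem hHtspec using key
    set D : Fin (m+1) → Set Ordinal := fun i =>
      A i.succ ∩ {β | β < κ i.succ ∧ ∀ α, α < β → β ∈ Ht α i} with hDdef
    have hDmem : ∀ i, D i ∈ U i.succ := by
      intro i
      have hdiag := (hU i.succ).2.2.2.2.2.2.1 (fun α => Ht α i)
        (fun α _ => hHtmem α i)
      exact inter_mem' (hκ i.succ) (hU i.succ) (hA i.succ) hdiag
    have hcB : ∀ j, ∃ c B, B ∈ U 0 ∧ B ⊆ A 0 ∧ (j < lam → ∀ α ∈ B, ct α j = c) := by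
      intro j
      by_cases hj : j < lam
      · obtain ⟨c, B, hB1, hB2, hB3⟩ := const_on' (hκ 0) (hU 0) (hA 0) (hν j hj)
          (g := fun α => ct α j) (fun α hα => ((hHtspec α hα).2 j hj).1)
        exact ⟨c, B, hB1, hB2, fun _ => hB3⟩
      · exact ⟨0, A 0, hA 0, le_refl _, fun h => absurd h hj⟩
    choose cc B hBmem hBsub hBconst using hcB
    have hH0mem : (A 0 ∩ ⋂ j ∈ Set.Iio lam, B j) ∈ U 0 :=
      biinter_mem' (hκ 0) (hU 0) hlam (fun j _ => hBmem j) (hA 0)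
    refine ⟨Fin.cons (A 0 ∩ ⋂ j ∈ Set.Iio lam, B j) D, ?_, ?_, ?_⟩
    · intro i
      induction i using Fin.cases with
      | zero => simpa using fun x hx => hx.1
      | succ i => exact fun x (hx : x ∈ D i) => hx.1
    · intro i
      induction i using Fin.cases with
      | zero => simpa using hH0mem
      | succ i => simpa using hDmem i
    · intro j hj
      refine ⟨cc j, ?_⟩
      intro a ha hamem
      have ha0 : a 0 ∈ A 0 ∩ ⋂ j ∈ Set.Iio lam, B j := by simpa using hamem 0
      have hαA : a 0 ∈ A 0 := ha0.1
      have hαB : a 0 ∈ B j := by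
        have := ha0.2; rw [Set.mem_iInter₂] at this; exact this j hj
      have htail : ∀ i : Fin (m+1), a i.succ ∈ Ht (a 0) i := by
        intro i
        have hmem := hamem i.succ
        rw [Fin.cons_succ] at hmem
        exact hmem.2.2 (a 0) (ha (Fin.succ_pos i))
      have htailmono : StrictMono (Fin.tail a) := by
        intro x y hxy
        exact ha (Fin.succ_lt_succ_iff.mpr hxy)
      have hval := ((hHtspec (a 0) hαA).2 j hj).2 (Fin.tail a) htailmono htail
      rw [Fin.cons_self_tail] at hval
      rw [hval]
      exact hBconst j hj (a 0) hαB

/-- A family of fewer than `κ₁` many functions, each mapping the increasing products of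
measure-one sets into an ordinal below `κ₁`, can be simultaneously stabilized on an
increasing product of measure-one subsets. -/
theorem stmt_1 (n : ℕ) (hn : 0 < n) (κ : Fin n → Ordinal) (hκmono : Monotone κ)
    (hκ : ∀ i, IsUncountableRegularCard (κ i))
    (U : Fin n → Set (Set Ordinal)) (hU : ∀ i, IsNormalMeasure (κ i) (U i))
    (A : Fin n → Set Ordinal) (hA : ∀ i, A i ∈ U i)
    (lam : Ordinal) (hlam : lam < κ ⟨0, hn⟩)
    (F : Ordinal → (Fin n → Ordinal) → Ordinal)
    (ν : Ordinal → Ordinal) (hν : ∀ j, j < lam → ν j < κ ⟨0, hn⟩)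
    (hF : ∀ j, j < lam → ∀ a : Fin n → Ordinal, StrictMono a → (∀ i, a i ∈ A i) →
      F j a < ν j) :
    ∃ H : Fin n → Set Ordinal, (∀ i, H i ⊆ A i) ∧ (∀ i, H i ∈ U i) ∧
      ∀ j, j < lam → ∃ c : Ordinal,
        ∀ a : Fin n → Ordinal, StrictMono a → (∀ i, a i ∈ H i) → F j a = c := by
  cases n with
  | zero => omega
  | succ m =>
    have h0 : (⟨0, hn⟩ : Fin (m+1)) = 0 := rfl
    rw [h0] at hlam hν
    exact aux m κ hκmono hκ U hU A hA lam hlam F ν hν hF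
end

section
/- Let κ₁ ≤ κ₂ ≤ ... ≤ κₙ be a non-decreasing finite sequence of uncountable regular cardinals with n ≥ 1, for each i let Uᵢ be a normal measure on κᵢ, let Aᵢ ∈ Uᵢ, let B be an arbitrary set, let F be a function assigning to every strictly increasing n-tuple from ∏ᵢAᵢ an element of B, and let I' ⊆ {2,...,n}. Assume: (1) for any two strictly increasing n-tuples from ∏ᵢAᵢ having the same first coordinate, their F-values are equal if and only if the tuples agree on every coordinate in I'; and (2) for any x₁, x₁' ∈ A₁ and any tuple ⟨x₂,...,xₙ⟩ such that both ⟨x₁,x₂,...,xₙ⟩ and ⟨x₁',x₂,...,xₙ⟩ are strictly increasing tuples from ∏ᵢAᵢ, one has F(x₁,x₂,...,xₙ) = F(x₁',x₂,...,xₙ) if and only if x₁ = x₁'. Then there exist sets Hᵢ ⊆ Aᵢ with Hᵢ ∈ Uᵢ such that for any two strictly increasing n-tuples from ∏ᵢHᵢ, their F-values are equal if and only if the tuples agree on every coordinate in I' ∪ {1}. -/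
namespace NM

open Set Cardinal

universe u
variable {κ : Ordinal.{u}} {U : Set (Set Ordinal.{u})}

theorem sub (hU : IsNormalMeasure κ U) {A : Set Ordinal} (h : A ∈ U) : A ⊆ Set.Iio κ :=
  hU.1 A h

theorem top (hU : IsNormalMeasure κ U) : Set.Iio κ ∈ U := hU.2.1

theorem upward (hU : IsNormalMeasure κ U) {A B : Set Ordinal} (hA : A ∈ U) (hAB : A ⊆ B)
    (hB : B ⊆ Set.Iio κ) : B ∈ U := hU.2.2.2.1 A B hA hAB hB

/-- small intersections -/
theorem smallInter (hκ : IsUncountableRegularCard κ) (hU : IsNormalMeasure κ U)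
    {ι : Type (u+1)} (t : ι → Set Ordinal) (ht : ∀ i, t i ∈ U)
    (hcard : #ι < Cardinal.lift.{u+1,u} κ.card) :
    (Set.Iio κ ∩ ⋂ i, t i) ∈ U := by
  obtain ⟨c, hc⟩ := Cardinal.mem_range_lift_of_le hcard.le
  have hcκ : c < κ.card := by
    rwa [← hc, Cardinal.lift_lt] at hcard
  set γ := c.ord with hγ
  have hγκ : γ < κ := by
    rw [← hκ.2.2]
    exact Cardinal.ord_lt_ord.2 hcκ
  have hmk : #ι ≤ #(Set.Iio γ) := by
    rw [Ordinal.mk_Iio_ordinal, hγ, Cardinal.card_ord, hc]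
  obtain ⟨f⟩ := hmk
  classical
  set s : Ordinal → Set Ordinal := fun o =>
    if h : ∃ i, (f i : Ordinal) = o then t h.choose else Set.Iio κ with hs
  have hsU : ∀ o, o < γ → s o ∈ U := by
    intro o _
    rw [hs]
    dsimp only
    split
    · exact ht _
    · exact hU.2.1
  have key := hU.2.2.2.2.2.1 γ hγκ s hsU
  refine hU.2.2.2.1 _ _ key ?_ ?_
  · intro β hβ
    refine ⟨hβ.1, ?_⟩
    rw [Set.mem_iInter]
    intro i
    have h2 := hβ.2
    rw [Set.mem_iInter₂] at h2
    have := h2 (f i : Ordinal) (f i).2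
    rw [hs] at this
    dsimp only at this
    rw [dif_pos ⟨i, rfl⟩] at this
    have hch : (⟨i, rfl⟩ : ∃ j, (f j : Ordinal) = (f i : Ordinal)).choose = i := by
      have := (⟨i, rfl⟩ : ∃ j, (f j : Ordinal) = (f i : Ordinal)).choose_spec
      exact f.injective (Subtype.ext this)
    rw [hch] at this
    exact this
  · intro β hβ
    exact hβ.1

theorem inter_mem (hκ : IsUncountableRegularCard κ) (hU : IsNormalMeasure κ U)
    {A B : Set Ordinal} (hA : A ∈ U) (hB : B ∈ U) : A ∩ B ∈ U := by
  classical
  set t : ULift.{u+1} Bool → Set Ordinal := fun b => if b.down then A else B with hts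
  have key := smallInter hκ hU t (by
    intro i
    rw [hts]
    dsimp only
    split <;> assumption) (by
      have h1 : #(ULift.{u+1} Bool) = 2 := by simp
      rw [h1]
      have h2 : (2 : Cardinal.{u+1}) < Cardinal.lift.{u+1,u} Cardinal.aleph0 := by
        rw [Cardinal.lift_aleph0]
        exact Cardinal.nat_lt_aleph0 2
      exact lt_of_lt_of_le h2 (by
        rw [Cardinal.lift_le]
        exact hκ.1.le))
  have heq : ⋂ i, t i = A ∩ B := by
    apply Set.Subset.antisymm
    · intro a ha
      rw [Set.mem_iInter] at ha
      have h1 := ha ⟨true⟩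
      have h2 := ha ⟨false⟩
      rw [hts] at h1 h2
      simp at h1 h2
      exact ⟨h1, h2⟩
    · intro a ha
      rw [Set.mem_iInter]
      intro i
      rw [hts]
      dsimp only
      split
      · exact ha.1
      · exact ha.2
  rw [heq] at key
  exact upward hU key Set.inter_subset_right (fun a ha => sub hU hA ha.1)

theorem not_both (hκ : IsUncountableRegularCard κ) (hU : IsNormalMeasure κ U)
    {A B : Set Ordinal} (hA : A ∈ U) (hAB : A ∩ B = ∅) (hB : B ∈ U) : False := by
  have := inter_mem hκ hU hA hB
  rw [hAB] at this
  exact hU.2.2.1 this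

theorem compl_mem (hU : IsNormalMeasure κ U) {A : Set Ordinal} (hA : A ⊆ Set.Iio κ)
    (h : A ∉ U) : Set.Iio κ \ A ∈ U := by
  rcases hU.2.2.2.2.1 A hA with h' | h'
  · exact absurd h' h
  · exact h'

theorem limit (hκ : IsUncountableRegularCard κ) : Order.IsSuccLimit κ := by
  rw [← hκ.2.2]
  exact Cardinal.isSuccLimit_ord hκ.1.le

theorem diff_Iio_mem (hκ : IsUncountableRegularCard κ) (hU : IsNormalMeasure κ U)
    {γ : Ordinal.{u}} (hγ : γ < κ) : Set.Iio κ \ Set.Iio γ ∈ U := by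
  classical
  have hts : ∀ o : ↥(Set.Iio γ), True := fun _ => trivial
  let t : ↥(Set.Iio γ) → Set Ordinal.{u} := fun o => Set.Iio κ \ {(o : Ordinal.{u})}
  have ht : ∀ o, t o ∈ U := by
    intro o
    apply compl_mem hU
    · intro a ha
      rw [Set.mem_singleton_iff] at ha
      rw [ha]
      exact lt_trans o.2 hγ
    · exact hU.2.2.2.2.2.2.2 _
  have hcard : #(↥(Set.Iio γ)) < Cardinal.lift.{u+1,u} κ.card := by
    rw [Ordinal.mk_Iio_ordinal, Cardinal.lift_lt]
    rw [← Cardinal.lt_ord, hκ.2.2]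
    exact hγ
  have key := smallInter hκ hU t ht hcard
  have heq : (Set.Iio κ ∩ ⋂ o, t o) = Set.Iio κ \ Set.Iio γ := by
    ext β
    simp only [t, Set.mem_inter_iff, Set.mem_iInter, Set.mem_diff, Set.mem_Iio,
      Set.mem_singleton_iff]
    constructor
    · rintro ⟨h1, h2⟩
      refine ⟨h1, fun hb => ?_⟩
      exact (h2 ⟨β, hb⟩).2 rfl
    · rintro ⟨h1, h2⟩
      refine ⟨h1, fun o => ⟨h1, fun hb => h2 (hb ▸ o.2)⟩⟩
  rw [heq] at key
  exact key

theorem Iio_not_mem (hκ : IsUncountableRegularCard κ) (hU : IsNormalMeasure κ U)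
    {γ : Ordinal.{u}} (hγ : γ < κ) : Set.Iio γ ∉ U := by
  intro h
  refine not_both hκ hU h ?_ (diff_Iio_mem hκ hU hγ)
  ext a
  simp only [Set.mem_inter_iff, Set.mem_diff, Set.mem_Iio, Set.mem_empty_iff_false,
    iff_false]
  rintro ⟨h1, _, h3⟩
  exact h3 h1

theorem unbounded (hκ : IsUncountableRegularCard κ) (hU : IsNormalMeasure κ U)
    {X : Set Ordinal.{u}} (hX : X ∈ U) {β : Ordinal.{u}} (hβ : β < κ) :
    ∃ c ∈ X, β < c := by
  by_contra h
  push_neg at h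
  have hsucc : β + 1 < κ := by
    have := (limit hκ).succ_lt hβ
    rwa [Order.succ_eq_add_one] at this
  refine not_both hκ hU hX ?_ (diff_Iio_mem hκ hU hsucc)
  ext a
  simp only [Set.mem_inter_iff, Set.mem_diff, Set.mem_Iio, Set.mem_empty_iff_false, iff_false]
  rintro ⟨h1, _, h3⟩
  exact h3 (lt_of_le_of_lt (h a h1) (lt_add_one β))

theorem pos (hκ : IsUncountableRegularCard κ) : (0 : Ordinal.{u}) < κ :=
  (limit hκ).pos

theorem card_small_tuples {κo : Ordinal.{u}} (hκ : IsUncountableRegularCard κo)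
    {m : ℕ} (α : Ordinal.{u}) (hα : α < κo) :
    #({f : Fin m → Ordinal.{u} // ∀ r, f r ≤ α}) < Cardinal.lift.{u+1,u} κo.card := by
  have he : #({f : Fin m → Ordinal.{u} // ∀ r, f r ≤ α}) = #(Fin m → ↥(Set.Iic α)) := by
    exact Cardinal.mk_congr (Equiv.subtypePiEquivPi)
  rw [he]
  have hIic : #(↥(Set.Iic α)) = Cardinal.lift.{u+1,u} (α+1).card := by
    have : Set.Iic α = Set.Iio (α+1) := by
      rw [Ordinal.add_one_eq_succ, Order.Iio_succ]
    rw [this, Ordinal.mk_Iio_ordinal]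
  have harrow : #(Fin m → ↥(Set.Iic α)) =
      (#(↥(Set.Iic α))) ^ (m : Cardinal.{u+1}) := by
    rw [Cardinal.mk_arrow]
    simp
  rw [harrow, hIic]
  have hle := Cardinal.power_nat_le_max
    (c := Cardinal.lift.{u+1,u} (α+1).card) (n := m)
  refine lt_of_le_of_lt hle ?_
  apply max_lt
  · rw [Cardinal.lift_lt]
    rw [← Cardinal.lt_ord, hκ.2.2]
    rw [Ordinal.add_one_eq_succ]
    exact (limit hκ).succ_lt hα
  · rw [← Cardinal.lift_aleph0.{u+1,u}, Cardinal.lift_lt]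
    exact hκ.1

theorem rowbottom {n : ℕ} (κ : Fin n → Ordinal.{u}) (U : Fin n → Set (Set Ordinal.{u}))
    (hκ : ∀ i, IsUncountableRegularCard (κ i)) (hU : ∀ i, IsNormalMeasure (κ i) (U i)) :
    ∀ (m : ℕ) (ι : Fin m → Fin n) (C : (Fin m → Ordinal.{u}) → Prop)
      (A : Fin n → Set Ordinal.{u}), (∀ i, A i ∈ U i) →
      ∃ D : Fin n → Set Ordinal.{u}, (∀ i, D i ∈ U i) ∧ (∀ i, D i ⊆ A i) ∧
        ∀ z w : Fin m → Ordinal.{u}, StrictMono z → (∀ r, z r ∈ D (ι r)) →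
          StrictMono w → (∀ r, w r ∈ D (ι r)) → (C z ↔ C w) := by
  intro m
  induction m with
  | zero =>
    intro ι C A hA
    refine ⟨A, hA, fun i => le_refl _, fun z w _ _ _ _ => ?_⟩
    have : z = w := funext fun r => r.elim0
    rw [this]
  | succ m IH =>
    intro ι C A hA
    classical
    set ℓ := ι (Fin.last m) with hℓ
    set Sx : (Fin m → Ordinal.{u}) → Set Ordinal.{u} :=
      fun z' => Set.Iio (κ ℓ) ∩ {β | C (Fin.snoc z' β)} with hSx
    set C' : (Fin m → Ordinal.{u}) → Prop := fun z' => Sx z' ∈ U ℓ with hC'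
    obtain ⟨D', hD'U, hD'A, hD'hom⟩ := IH (ι ∘ Fin.castSucc) C' A hA
    set G : (Fin m → Ordinal.{u}) → Set Ordinal.{u} :=
      fun z' => if Sx z' ∈ U ℓ then Sx z' else Set.Iio (κ ℓ) \ Sx z' with hG
    have hGU : ∀ z', G z' ∈ U ℓ := by
      intro z'
      rw [hG]
      dsimp only
      split
      · assumption
      · exact compl_mem (hU ℓ) Set.inter_subset_left (by assumption)
    have hGspec : ∀ z' β, β ∈ G z' → (C (Fin.snoc z' β) ↔ C' z') := by
      intro z' β hβ
      rw [hG] at hβ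
      dsimp only at hβ
      split at hβ
      · simp only [hC']
        constructor
        · intro _; assumption
        · intro _; exact hβ.2
      · simp only [hC']
        constructor
        · intro hc
          exact absurd ⟨hβ.1, hc⟩ hβ.2
        · intro hc
          exact absurd hc (by assumption)
    set T : Ordinal.{u} → Set Ordinal.{u} := fun α =>
      Set.Iio (κ ℓ) ∩ ⋂ z' : {f : Fin m → Ordinal.{u} // ∀ r, f r ≤ α}, G z'.val with hT
    have hTU : ∀ α, α < κ ℓ → T α ∈ U ℓ := by
      intro α hα
      exact smallInter (hκ ℓ) (hU ℓ) _ (fun z' => hGU z'.val) (card_small_tuples (hκ ℓ) α hα)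
    have hN := (hU ℓ).2.2.2.2.2.2.1 T hTU
    set Dfin := {β | β < κ ℓ ∧ ∀ α, α < β → β ∈ T α} ∩ T 0 with hDfin
    have hDfinU : Dfin ∈ U ℓ := inter_mem (hκ ℓ) (hU ℓ) hN (hTU 0 (pos (hκ ℓ)))
    have claim : ∀ β ∈ Dfin, ∀ z' : Fin m → Ordinal.{u}, (∀ r, z' r < β) →
        (C (Fin.snoc z' β) ↔ C' z') := by
      intro β hβ z' hz'
      rcases isEmpty_or_nonempty (Fin m) with hm | hm
      · have hmem : β ∈ T 0 := hβ.2
        rw [hT] at hmem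
        have := hmem.2
        rw [Set.mem_iInter] at this
        exact hGspec z' β (this ⟨z', fun r => (hm.elim r)⟩)
      · have h0 : (0 : Ordinal.{u}) < β :=
          lt_of_le_of_lt zero_le (hz' (Classical.arbitrary _))
        set α := Finset.univ.sup z' with hαdef
        have hα : α < β := by
          rw [hαdef]
          rw [Finset.sup_lt_iff (by rwa [Ordinal.bot_eq_zero])]
          intro r _
          exact hz' r
        have hmem : β ∈ T α := hβ.1.2 α hα
        rw [hT] at hmem
        have := hmem.2
        rw [Set.mem_iInter] at this
        exact hGspec z' β (this ⟨z', fun r => Finset.le_sup (Finset.mem_univ r)⟩)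
    refine ⟨fun i => D' i ∩ (if i = ℓ then Dfin else Set.Iio (κ i)), ?_, ?_, ?_⟩
    · intro i
      refine inter_mem (hκ i) (hU i) (hD'U i) ?_
      by_cases h : i = ℓ
      · rw [if_pos h, h]
        exact hDfinU
      · rw [if_neg h]
        exact top (hU i)
    · intro i
      exact Set.Subset.trans Set.inter_subset_left (hD'A i)
    · intro z w hz hzm hw hwm
      have hinitSM : ∀ (v : Fin (m+1) → Ordinal.{u}), StrictMono v → StrictMono (Fin.init v) :=
        fun v hv a b h => hv (Fin.castSucc_lt_castSucc_iff.mpr h)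
      have key : ∀ (v : Fin (m+1) → Ordinal.{u}), StrictMono v →
          (∀ r, v r ∈ D' (ι r) ∩ (if (ι r) = ℓ then Dfin else Set.Iio (κ (ι r)))) →
          (C v ↔ C' (Fin.init v)) := by
        intro v hv hvm
        have hβ : v (Fin.last m) ∈ Dfin := by
          have h1 := (hvm (Fin.last m)).2
          rwa [if_pos hℓ.symm] at h1
        have hco : ∀ r : Fin m, Fin.init v r < v (Fin.last m) := by
          intro r
          exact hv (Fin.castSucc_lt_last r)
        have := claim (v (Fin.last m)) hβ (Fin.init v) hco
        rwa [Fin.snoc_init_self] at this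
      have h1 := key z hz hzm
      have h2 := key w hw hwm
      have h3 := hD'hom (Fin.init z) (Fin.init w) (hinitSM z hz)
        (fun r => (hzm (Fin.castSucc r)).1) (hinitSM w hw)
        (fun r => (hwm (Fin.castSucc r)).1)
      rw [h1, h2, h3]

theorem Ueq_kappa_eq {n : ℕ} {κ : Fin n → Ordinal.{u}} {U : Fin n → Set (Set Ordinal.{u})}
    (hU : ∀ i, IsNormalMeasure (κ i) (U i)) {a b : Fin n} (h : U a = U b) : κ a = κ b := by
  have h1 : Set.Iio (κ a) ⊆ Set.Iio (κ b) := (hU b).1 _ (h ▸ top (hU a))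
  have h2 : Set.Iio (κ b) ⊆ Set.Iio (κ a) := (hU a).1 _ (h ▸ top (hU b))
  by_contra hne
  rcases lt_or_gt_of_ne hne with hlt | hlt
  · exact lt_irrefl _ (Set.mem_Iio.mp (h2 (Set.mem_Iio.mpr hlt)))
  · exact lt_irrefl _ (Set.mem_Iio.mp (h1 (Set.mem_Iio.mpr hlt)))

def PatIdx (n : ℕ) : Type :=
  Σ m : Fin (2*n+1), (Fin n → Fin m) × (Fin n → Fin m) × (Fin m → Fin n)

def Homog {n : ℕ} {B : Type v} (F : (Fin n → Ordinal.{u}) → B)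
    (H : Fin n → Set Ordinal.{u}) (σ : PatIdx n) : Prop :=
  ∀ z w : Fin (σ.1 : ℕ) → Ordinal.{u}, StrictMono z → (∀ r, z r ∈ H (σ.2.2.2 r)) →
    StrictMono w → (∀ r, w r ∈ H (σ.2.2.2 r)) →
    ((F (z ∘ σ.2.1) = F (z ∘ σ.2.2.1)) ↔ (F (w ∘ σ.2.1) = F (w ∘ σ.2.2.1)))

theorem Homog.mono {n : ℕ} {B : Type v} {F : (Fin n → Ordinal.{u}) → B}
    {H H' : Fin n → Set Ordinal.{u}} {σ : PatIdx n} (h : Homog F H σ)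
    (hsub : ∀ i, H' i ⊆ H i) : Homog F H' σ :=
  fun z w hz hzm hw hwm =>
    h z w hz (fun r => hsub _ (hzm r)) hw (fun r => hsub _ (hwm r))

theorem homogAll {n : ℕ} {κ : Fin n → Ordinal.{u}} {U : Fin n → Set (Set Ordinal.{u})}
    (hκ : ∀ i, IsUncountableRegularCard (κ i)) (hU : ∀ i, IsNormalMeasure (κ i) (U i))
    {B : Type v} (F : (Fin n → Ordinal.{u}) → B) (l : List (PatIdx n)) :
    ∀ (A : Fin n → Set Ordinal.{u}), (∀ i, A i ∈ U i) → (∀ a b, U a = U b → A a = A b) →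
    ∃ H : Fin n → Set Ordinal.{u}, (∀ i, H i ∈ U i) ∧ (∀ i, H i ⊆ A i) ∧
      (∀ a b, U a = U b → H a = H b) ∧ ∀ σ ∈ l, Homog F H σ := by
  classical
  induction l with
  | nil =>
    intro A hA hinv
    exact ⟨A, hA, fun i => le_refl _, hinv, fun σ h => absurd h List.not_mem_nil⟩
  | cons σ l IH =>
    intro A hA hinv
    obtain ⟨H₁, hH₁U, hH₁A, hH₁inv, hH₁hom⟩ := IH A hA hinv
    obtain ⟨D, hDU, hDsub, hDhom⟩ := rowbottom κ U hκ hU (σ.1 : ℕ) σ.2.2.2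
      (fun z => F (z ∘ σ.2.1) = F (z ∘ σ.2.2.1)) H₁ hH₁U
    set H₂ : Fin n → Set Ordinal.{u} :=
      fun i => ⋂ j : ULift.{u+1} (Fin n), (if U j.down = U i then D j.down else Set.Iio (κ i))
      with hH₂
    have hH₂D : ∀ i, H₂ i ⊆ D i := by
      intro i
      refine Set.Subset.trans (Set.iInter_subset _ ⟨i⟩) ?_
      rw [if_pos rfl]
    refine ⟨H₂, ?_, fun i => ((hH₂D i).trans (hDsub i)).trans (hH₁A i), ?_, ?_⟩
    · intro i
      have key := smallInter (hκ i) (hU i)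
        (fun j : ULift.{u+1} (Fin n) => (if U j.down = U i then D j.down else Set.Iio (κ i)))
        (by
          intro j
          show (if U j.down = U i then D j.down else Set.Iio (κ i)) ∈ U i
          split
          · rename_i h
            have := hDU j.down
            rwa [h] at this
          · exact top (hU i))
        (by
          have : #(ULift.{u+1} (Fin n)) < Cardinal.aleph0 := by
            simp [Cardinal.mk_fintype]
          refine this.trans_le ?_
          rw [← Cardinal.lift_aleph0.{u+1,u}, Cardinal.lift_le]
          exact (hκ i).1.le)
      exact upward (hU i) key Set.inter_subset_right
        (fun a ha => sub (hU i) (hDU i) (hH₂D i ha))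
    · intro a b hab
      have hk : κ a = κ b := Ueq_kappa_eq hU hab
      rw [hH₂]
      dsimp only
      exact Set.iInter_congr fun j => by rw [hab, hk]
    · intro τ hτ
      rcases List.mem_cons.mp hτ with h | h
      · subst h
        exact Homog.mono (fun z w hz hzm hw hwm => hDhom z w hz hzm hw hwm) hH₂D
      · exact Homog.mono (hH₁hom τ h) (fun i => (hH₂D i).trans (hDsub i))

open Classical in
noncomputable def SepSet (V W : Set (Set Ordinal.{u})) : Set Ordinal.{u} :=
  if h : ∃ S, S ∈ V ∧ S ∉ W then h.choose else ∅

theorem sep_exists {n : ℕ} {κ : Fin n → Ordinal.{u}} {U : Fin n → Set (Set Ordinal.{u})}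
    (hκ : ∀ i, IsUncountableRegularCard (κ i)) (hU : ∀ i, IsNormalMeasure (κ i) (U i))
    {a b : Fin n} (hab : U a ≠ U b) (hk : κ a = κ b) : ∃ S, S ∈ U a ∧ S ∉ U b := by
  by_contra hno
  push_neg at hno
  apply hab
  ext S
  constructor
  · exact hno S
  · intro hS
    have hsub : S ⊆ Set.Iio (κ a) := by
      rw [hk]
      exact sub (hU b) hS
    rcases (hU a).2.2.2.2.1 S hsub with h | h
    · exact h
    · exfalso
      have hbb := hno _ h
      rw [hk] at hbb
      refine not_both (hκ b) (hU b) hbb ?_ hS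
      ext x
      simp only [Set.mem_inter_iff, Set.mem_diff, Set.mem_empty_iff_false, iff_false]
      rintro ⟨⟨_, h2⟩, h3⟩
      exact h2 h3

theorem sep_spec {n : ℕ} {κ : Fin n → Ordinal.{u}} {U : Fin n → Set (Set Ordinal.{u})}
    (hκ : ∀ i, IsUncountableRegularCard (κ i)) (hU : ∀ i, IsNormalMeasure (κ i) (U i))
    {a b : Fin n} (hab : U a ≠ U b) (hk : κ a = κ b) :
    SepSet (U a) (U b) ∈ U a ∧ SepSet (U a) (U b) ∉ U b := by
  unfold SepSet
  rw [dif_pos (sep_exists hκ hU hab hk)]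
  exact (sep_exists hκ hU hab hk).choose_spec

theorem preprocess {n : ℕ} {κ : Fin n → Ordinal.{u}} {U : Fin n → Set (Set Ordinal.{u})}
    (hκ : ∀ i, IsUncountableRegularCard (κ i)) (hU : ∀ i, IsNormalMeasure (κ i) (U i))
    (A : Fin n → Set Ordinal.{u}) (hA : ∀ i, A i ∈ U i) :
    ∃ Ab : Fin n → Set Ordinal.{u}, (∀ i, Ab i ∈ U i) ∧ (∀ i, Ab i ⊆ A i) ∧
      (∀ a b, U a = U b → Ab a = Ab b) ∧
      (∀ i j, κ j < κ i → ∀ c ∈ Ab i, κ j ≤ c) ∧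
      (∀ i j, U i ≠ U j → Ab i ∩ Ab j = ∅) := by
  classical
  set γf : Ordinal.{u} → Ordinal.{u} :=
    fun c => (Finset.univ.filter (fun j => κ j < c)).sup κ with hγf
  have hγlt : ∀ i, γf (κ i) < κ i := by
    intro i
    rw [hγf]
    dsimp only
    rw [Finset.sup_lt_iff (by rw [Ordinal.bot_eq_zero]; exact pos (hκ i))]
    intro j hj
    exact (Finset.mem_filter.mp hj).2
  have hγge : ∀ i j, κ j < κ i → κ j ≤ γf (κ i) := by
    intro i j h
    exact Finset.le_sup (Finset.mem_filter.mpr ⟨Finset.mem_univ j, h⟩)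
  set E : Set (Set Ordinal.{u}) → Ordinal.{u} → Fin n → Set Ordinal.{u} :=
    fun V c j =>
      if U j = V then A j
      else if κ j = c then SepSet V (U j) ∩ (Set.Iio c \ SepSet (U j) V)
      else Set.Iio c with hE
  set AbF : Set (Set Ordinal.{u}) → Ordinal.{u} → Set Ordinal.{u} :=
    fun V c => (⋂ j : ULift.{u+1} (Fin n), E V c j.down) ∩ (Set.Iio c \ Set.Iio (γf c))
    with hAbF
  set Ab : Fin n → Set Ordinal.{u} := fun i => AbF (U i) (κ i) with hAb
  have hET : ∀ i j, E (U i) (κ i) j ∈ U i := by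
    intro i j
    rw [hE]
    dsimp only
    split
    · rename_i h
      have := hA j
      rwa [h] at this
    · rename_i hne
      split
      · rename_i hkj
        have h1 := sep_spec hκ hU (fun h => hne h.symm) hkj.symm
        have h2 := sep_spec hκ hU hne hkj
        refine inter_mem (hκ i) (hU i) h1.1 ?_
        apply compl_mem (hU i)
        · have := sub (hU j) h2.1
          rwa [hkj] at this
        · exact h2.2
      · exact top (hU i)
  have hAbU : ∀ i, Ab i ∈ U i := by
    intro i
    rw [hAb]
    dsimp only
    refine inter_mem (hκ i) (hU i) ?_ (diff_Iio_mem (hκ i) (hU i) (hγlt i))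
    have key := smallInter (hκ i) (hU i)
      (fun j : ULift.{u+1} (Fin n) => E (U i) (κ i) j.down)
      (fun j => hET i j.down)
      (by
        have : #(ULift.{u+1} (Fin n)) < Cardinal.aleph0 := by
          simp [Cardinal.mk_fintype]
        refine this.trans_le ?_
        rw [← Cardinal.lift_aleph0.{u+1,u}, Cardinal.lift_le]
        exact (hκ i).1.le)
    refine upward (hU i) key Set.inter_subset_right ?_
    intro a ha
    have := Set.mem_iInter.mp ha ⟨i⟩
    have hEi : E (U i) (κ i) i = A i := by
      rw [hE]
      dsimp only
      rw [if_pos rfl]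
    rw [hEi] at this
    exact sub (hU i) (hA i) this
  have hAbA : ∀ i, Ab i ⊆ A i := by
    intro i x hx
    have := Set.mem_iInter.mp hx.1 ⟨i⟩
    have hEi : E (U i) (κ i) i = A i := by
      rw [hE]; dsimp only; rw [if_pos rfl]
    rwa [hEi] at this
  refine ⟨Ab, hAbU, hAbA, ?_, ?_, ?_⟩
  · intro a b hab
    rw [hAb]
    dsimp only
    rw [hab, Ueq_kappa_eq hU hab]
  · intro i j hji c hc
    have h2 := hc.2
    by_contra hlt
    push_neg at hlt
    exact h2.2 (lt_of_lt_of_le hlt (hγge i j hji))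
  · intro i j hij
    ext x
    simp only [Set.mem_inter_iff, Set.mem_empty_iff_false, iff_false]
    rintro ⟨hxi, hxj⟩
    rcases lt_trichotomy (κ i) (κ j) with hk | hk | hk
    · have h1 : x < κ i := hxi.2.1
      have h2 : κ i ≤ x := by
        by_contra hlt
        push_neg at hlt
        exact hxj.2.2 (lt_of_lt_of_le hlt (hγge j i hk))
      exact absurd h1 (not_lt.mpr h2)
    · have hxi' := Set.mem_iInter.mp hxi.1 ⟨j⟩
      have hxj' := Set.mem_iInter.mp hxj.1 ⟨i⟩
      rw [hE] at hxi' hxj'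
      dsimp only at hxi' hxj'
      rw [if_neg (fun h => hij h.symm), if_pos hk.symm] at hxi'
      rw [if_neg hij, if_pos hk] at hxj'
      exact hxi'.2.2 hxj'.1
    · have h1 : x < κ j := hxj.2.1
      have h2 : κ j ≤ x := by
        by_contra hlt
        push_neg at hlt
        exact hxi.2.2 (lt_of_lt_of_le hlt (hγge i j hk))
      exact absurd h1 (not_lt.mpr h2)

noncomputable def gseq (p : ℕ → Ordinal.{u} → Ordinal.{u}) : ℕ → Ordinal.{u} × Ordinal.{u}
  | 0 => (p 0 0, p 0 (p 0 0))
  | (k+1) => (p (k+1) (gseq p k).2, p (k+1) (p (k+1) (gseq p k).2))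

theorem no_bad {n : ℕ} (hn : 0 < n) {κ : Fin n → Ordinal.{u}}
    {U : Fin n → Set (Set Ordinal.{u})}
    (hκ : ∀ i, IsUncountableRegularCard (κ i)) (hU : ∀ i, IsNormalMeasure (κ i) (U i))
    {A : Fin n → Set Ordinal.{u}} {B : Type v} {F : (Fin n → Ordinal.{u}) → B}
    (H : Fin n → Set Ordinal.{u})
    (hHU : ∀ i, H i ∈ U i) (hHA : ∀ i, H i ⊆ A i)
    (hinv : ∀ a b, U a = U b → H a = H b)
    (hlow : ∀ i j, κ j < κ i → ∀ c ∈ H i, κ j ≤ c)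
    (hdisj : ∀ i j, U i ≠ U j → H i ∩ H j = ∅)
    (hhom : ∀ σ : PatIdx n, Homog F H σ)
    (h2 : ∀ x y : Fin n → Ordinal.{u}, StrictMono x → (∀ i, x i ∈ A i) →
      StrictMono y → (∀ i, y i ∈ A i) → (∀ i, i ≠ (⟨0, hn⟩ : Fin n) → x i = y i) →
      (F x = F y ↔ x ⟨0, hn⟩ = y ⟨0, hn⟩))
    (x y : Fin n → Ordinal.{u}) (hx : StrictMono x) (hxm : ∀ i, x i ∈ H i)
    (hy : StrictMono y) (hym : ∀ i, y i ∈ H i) (hFxy : F x = F y)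
    (hlt : x ⟨0, hn⟩ < y ⟨0, hn⟩) : False := by
  classical
  have hHsub : ∀ i, H i ⊆ Set.Iio (κ i) := fun i => sub (hU i) (hHU i)
  set S : Finset Ordinal.{u} :=
    Finset.image x Finset.univ ∪ Finset.image y Finset.univ with hS
  set m : ℕ := S.card with hmdef
  have hm2 : m < 2*n+1 := by
    have h1 : S.card ≤ (Finset.image x Finset.univ).card + (Finset.image y Finset.univ).card :=
      Finset.card_union_le _ _
    have h2' : (Finset.image x Finset.univ).card ≤ n := by
      refine le_trans (Finset.card_image_le) ?_
      simp
    have h3' : (Finset.image y Finset.univ).card ≤ n := by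
      refine le_trans (Finset.card_image_le) ?_
      simp
    omega
  set e := S.orderIsoOfFin (rfl : S.card = m) with he
  have hxS : ∀ i, x i ∈ S := by
    intro i
    rw [hS]
    exact Finset.mem_union_left _ (Finset.mem_image_of_mem x (Finset.mem_univ i))
  have hyS : ∀ j, y j ∈ S := by
    intro j
    rw [hS]
    exact Finset.mem_union_right _ (Finset.mem_image_of_mem y (Finset.mem_univ j))
  set P : Fin n → Fin m := fun i => e.symm ⟨x i, hxS i⟩ with hP
  set Q : Fin n → Fin m := fun j => e.symm ⟨y j, hyS j⟩ with hQ
  set val : Fin m → Ordinal.{u} := fun r => ((e r : ↥S) : Ordinal.{u}) with hvaldef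
  have hvalSM : StrictMono val := by
    intro a b h
    exact Subtype.coe_lt_coe.mpr (e.strictMono h)
  have hvalP : ∀ i, val (P i) = x i := by
    intro i
    rw [hvaldef, hP]
    dsimp only
    rw [OrderIso.apply_symm_apply]
  have hvalQ : ∀ j, val (Q j) = y j := by
    intro j
    rw [hvaldef, hQ]
    dsimp only
    rw [OrderIso.apply_symm_apply]
  have hPSM : StrictMono P := by
    intro a b h
    exact (OrderIso.lt_iff_lt e.symm).mpr (Subtype.mk_lt_mk.mpr (hx h))
  have hQSM : StrictMono Q := by
    intro a b h
    exact (OrderIso.lt_iff_lt e.symm).mpr (Subtype.mk_lt_mk.mpr (hy h))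
  have hvalmemS : ∀ r, val r ∈ S := fun r => (e r).2
  have hex : ∀ r : Fin m, (¬ ∃ i, x i = val r) → ∃ j, y j = val r := by
    intro r hne
    have := hvalmemS r
    rw [hS, Finset.mem_union] at this
    rcases this with h | h
    · obtain ⟨i, _, hi⟩ := Finset.mem_image.mp h
      exact absurd ⟨i, hi⟩ hne
    · obtain ⟨j, _, hj⟩ := Finset.mem_image.mp h
      exact ⟨j, hj⟩
  set ιf : Fin m → Fin n := fun r =>
    if h : ∃ i, x i = val r then h.choose else (hex r h).choose with hιf
  have hιmem : ∀ r, val r ∈ H (ιf r) := by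
    intro r
    rw [hιf]
    dsimp only
    split
    · rename_i h
      exact Set.mem_of_eq_of_mem h.choose_spec.symm (hxm _)
    · rename_i h
      exact Set.mem_of_eq_of_mem (hex r h).choose_spec.symm (hym _)
  have hιP : ∀ i, ιf (P i) = i := by
    intro i
    rw [hιf]
    dsimp only
    have hv : val (P i) = x i := hvalP i
    rw [dif_pos ⟨i, hv.symm⟩]
    exact hx.injective ((⟨i, hv.symm⟩ : ∃ i', x i' = val (P i)).choose_spec.trans hv)
  have hιQ : ∀ j, H (ιf (Q j)) = H j := by
    intro j
    rw [hιf]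
    dsimp only
    have hv : val (Q j) = y j := hvalQ j
    split
    · rename_i h
      set i₀ := h.choose with hi₀
      have hspec : x i₀ = val (Q j) := h.choose_spec
      by_cases hUe : U i₀ = U j
      · exact hinv _ _ hUe
      · exfalso
        have hempty := hdisj i₀ j hUe
        have : x i₀ ∈ H i₀ ∩ H j := ⟨hxm i₀, by rw [hspec, hv]; exact hym j⟩
        rw [hempty] at this
        exact this
    · rename_i h
      have hspec : y ((hex (Q j) h).choose) = val (Q j) := (hex (Q j) h).choose_spec
      rw [hy.injective (hspec.trans hv)]
  have hQP0 : ∀ j, Q j ≠ P ⟨0, hn⟩ := by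
    intro j hjq
    have h1 : y j = x ⟨0, hn⟩ := by
      rw [← hvalQ j, ← hvalP ⟨0, hn⟩, hjq]
    have h2' : y ⟨0, hn⟩ ≤ y j := hy.monotone (Fin.mk_le_mk.mpr (Nat.zero_le _))
    rw [h1] at h2'
    exact absurd hlt (not_lt.mpr h2')
  -- slot monotonicity of κ along merged tuple
  have hslot : ∀ r r' : Fin m, r ≤ r' → κ (ιf r) ≤ κ (ιf r') := by
    intro r r' hrr
    rcases eq_or_lt_of_le hrr with heq | hlt'
    · rw [heq]
    · by_contra hgt
      push_neg at hgt
      have h1 : κ (ιf r') ≤ val r := hlow (ιf r) (ιf r') hgt (val r) (hιmem r)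
      have h2' : val r < val r' := hvalSM hlt'
      have h3' : val r' < κ (ιf r') := hHsub _ (hιmem r')
      exact absurd (h1.trans_lt (h2'.trans h3')) (lt_irrefl _)
  -- construction of doubled tuple
  set idx : ℕ → Fin n := fun k => if h : k < m then ιf ⟨k, h⟩ else ⟨0, hn⟩ with hidx
  have hidxr : ∀ r : Fin m, idx ↑r = ιf r := by
    intro r
    rw [hidx]
    dsimp only
    rw [dif_pos r.2]
  have hpick : ∀ (i : Fin n) (β : Ordinal.{u}), β < κ i → ∃ c ∈ H i, β < c :=
    fun i β h => unbounded (hκ i) (hU i) (hHU i) h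
  set pick : Fin n → Ordinal.{u} → Ordinal.{u} :=
    fun i β => if h : β < κ i then (hpick i β h).choose else 0 with hpickdef
  have hpickmem : ∀ i β, β < κ i → pick i β ∈ H i ∧ β < pick i β := by
    intro i β h
    rw [hpickdef]
    dsimp only
    rw [dif_pos h]
    exact ⟨(hpick i β h).choose_spec.1, (hpick i β h).choose_spec.2⟩
  set g : ℕ → Ordinal.{u} × Ordinal.{u} := gseq (fun k => pick (idx k)) with hg
  have hg0 : g 0 = (pick (idx 0) 0, pick (idx 0) (pick (idx 0) 0)) := rfl
  have hgs : ∀ k, g (k+1) =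
      (pick (idx (k+1)) (g k).2, pick (idx (k+1)) (pick (idx (k+1)) (g k).2)) :=
    fun k => rfl
  have hslotk : ∀ k, k + 1 < m → κ (idx k) ≤ κ (idx (k+1)) := by
    intro k hk
    have h1 : k < m := Nat.lt_of_succ_lt hk
    rw [hidx]
    dsimp only
    rw [dif_pos h1, dif_pos hk]
    exact hslot _ _ (Fin.mk_le_mk.mpr (Nat.le_succ k))
  have hginv : ∀ k, k < m → (g k).1 ∈ H (idx k) ∧ (g k).2 ∈ H (idx k) ∧ (g k).1 < (g k).2 := by
    intro k
    induction k with
    | zero =>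
      intro _
      have h0 : (0 : Ordinal.{u}) < κ (idx 0) := pos (hκ _)
      have s1 := hpickmem (idx 0) 0 h0
      have s2 := hpickmem (idx 0) _ (hHsub _ s1.1)
      rw [hg0]
      exact ⟨s1.1, s2.1, s2.2⟩
    | succ k IH =>
      intro hk
      have h1 : k < m := Nat.lt_of_succ_lt hk
      obtain ⟨_, hb, _⟩ := IH h1
      have hbk : (g k).2 < κ (idx (k+1)) := lt_of_lt_of_le (hHsub _ hb) (hslotk k hk)
      have s1 := hpickmem (idx (k+1)) _ hbk
      have s2 := hpickmem (idx (k+1)) _ (hHsub _ s1.1)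
      rw [hgs k]
      exact ⟨s1.1, s2.1, s2.2⟩
  have hgstep : ∀ k, k + 1 < m → (g k).2 < (g (k+1)).1 := by
    intro k hk
    have h1 : k < m := Nat.lt_of_succ_lt hk
    obtain ⟨_, hb, _⟩ := hginv k h1
    have hbk : (g k).2 < κ (idx (k+1)) := lt_of_lt_of_le (hHsub _ hb) (hslotk k hk)
    have s1 := hpickmem (idx (k+1)) _ hbk
    rw [hgs k]
    exact s1.2
  have hchain : ∀ l, l < m → ∀ k, k < l → (g k).2 < (g l).1 := by
    intro l
    induction l with
    | zero => intro _ k hk; omega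
    | succ l IH =>
      intro hl k hk
      rcases Nat.lt_succ_iff_lt_or_eq.mp hk with h | h
      · have h1 : l < m := Nat.lt_of_succ_lt hl
        calc (g k).2 < (g l).1 := IH h1 k h
        _ < (g l).2 := (hginv l h1).2.2
        _ < (g (l+1)).1 := hgstep l hl
      · subst h
        exact hgstep k hl
  set w : Fin m → Ordinal.{u} := fun r => (g ↑r).1 with hw
  have hwSM : StrictMono w := by
    intro a b hab
    calc (g ↑a).1 < (g ↑a).2 := (hginv ↑a a.2).2.2
    _ < (g ↑b).1 := hchain ↑b b.2 ↑a hab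
  have hwmem : ∀ r, w r ∈ H (ιf r) := by
    intro r
    rw [← hidxr r]
    exact (hginv ↑r r.2).1
  set s0 : Fin m := P ⟨0, hn⟩ with hs0
  set w' : Fin m → Ordinal.{u} := Function.update w s0 (g ↑s0).2 with hw'
  have hw's0 : w' s0 = (g ↑s0).2 := Function.update_self _ _ _
  have hw'ne : ∀ r, r ≠ s0 → w' r = w r := fun r h => Function.update_of_ne h _ _
  have hw'mem : ∀ r, w' r ∈ H (ιf r) := by
    intro r
    by_cases h : r = s0
    · rw [h, hw's0]
      have := (hginv ↑s0 s0.2).2.1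
      rwa [hidxr s0] at this
    · rw [hw'ne r h]
      exact hwmem r
  have hw'SM : StrictMono w' := by
    intro a b hab
    by_cases hb : b = s0
    · have ha : a ≠ s0 := fun h => absurd hab (by rw [h, hb]; exact lt_irrefl _)
      rw [hb, hw's0, hw'ne a ha]
      have h1 : w a < w s0 := hwSM (hb ▸ hab)
      exact h1.trans ((hginv ↑s0 s0.2).2.2)
    · rw [hw'ne b hb]
      by_cases ha : a = s0
      · rw [ha, hw's0]
        exact hchain ↑b b.2 ↑s0 (ha ▸ hab)
      · rw [hw'ne a ha]
        exact hwSM hab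
  -- apply homogeneity
  set σ : PatIdx n := ⟨⟨m, hm2⟩, P, Q, ιf⟩ with hσ
  have hσhom := hhom σ
  have happ1 := hσhom val w hvalSM hιmem hwSM hwmem
  have happ2 := hσhom val w' hvalSM hιmem hw'SM hw'mem
  have hvx : val ∘ P = x := funext hvalP
  have hvy : val ∘ Q = y := funext hvalQ
  have hFw : F (w ∘ P) = F (w ∘ Q) := by
    rw [← happ1]
    show F (val ∘ P) = F (val ∘ Q)
    rw [hvx, hvy]
    exact hFxy
  have hFw' : F (w' ∘ P) = F (w' ∘ Q) := by
    rw [← happ2]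
    show F (val ∘ P) = F (val ∘ Q)
    rw [hvx, hvy]
    exact hFxy
  have hQeq : w ∘ Q = w' ∘ Q := by
    funext j
    exact (hw'ne (Q j) (hQP0 j)).symm
  have hFPP : F (w ∘ P) = F (w' ∘ P) := by
    rw [hFw, hQeq, hFw']
  have hPmemA : ∀ i, (w ∘ P) i ∈ A i := by
    intro i
    have := hwmem (P i)
    rw [hιP i] at this
    exact hHA i this
  have hP'memA : ∀ i, (w' ∘ P) i ∈ A i := by
    intro i
    have := hw'mem (P i)
    rw [hιP i] at this
    exact hHA i this
  have hagree : ∀ i, i ≠ (⟨0, hn⟩ : Fin n) → (w ∘ P) i = (w' ∘ P) i := by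
    intro i hi
    show w (P i) = w' (P i)
    rw [hw'ne (P i) (fun h => hi (hPSM.injective (h.trans hs0)))]
  have := (h2 (w ∘ P) (w' ∘ P) (hwSM.comp hPSM) hPmemA (hw'SM.comp hPSM) hP'memA hagree).mp hFPP
  have hfin : w s0 = w' s0 := this
  rw [hw's0] at hfin
  exact absurd ((hginv ↑s0 s0.2).2.2) (by rw [← hfin]; exact lt_irrefl _)

instance patFintype (n : ℕ) : Fintype (PatIdx n) :=
  inferInstanceAs (Fintype (Σ m : Fin (2*n+1), (Fin n → Fin m) × (Fin n → Fin m) × (Fin m → Fin n)))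

end NM


/-- The key step in the proof of Lemma 2.3: if `F` is injective modulo `I' ⊆ {2,...,n}` on
tuples with the same first coordinate, and injective in the first coordinate on tuples agreeing
everywhere else, then on an increasing product of measure-one subsets `F` is injective modulo
`I' ∪ {1}`. -/
theorem stmt_6 (n : ℕ) (hn : 0 < n) (κ : Fin n → Ordinal) (hκmono : Monotone κ)
    (hκ : ∀ i, IsUncountableRegularCard (κ i))
    (U : Fin n → Set (Set Ordinal)) (hU : ∀ i, IsNormalMeasure (κ i) (U i))
    (A : Fin n → Set Ordinal) (hA : ∀ i, A i ∈ U i)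
    (B : Type*) (F : (Fin n → Ordinal) → B)
    (I' : Set (Fin n)) (hI' : (⟨0, hn⟩ : Fin n) ∉ I')
    (h1 : ∀ x y : Fin n → Ordinal, StrictMono x → (∀ i, x i ∈ A i) →
      StrictMono y → (∀ i, y i ∈ A i) → x ⟨0, hn⟩ = y ⟨0, hn⟩ →
      (F x = F y ↔ ∀ i ∈ I', x i = y i))
    (h2 : ∀ x y : Fin n → Ordinal, StrictMono x → (∀ i, x i ∈ A i) →
      StrictMono y → (∀ i, y i ∈ A i) → (∀ i, i ≠ (⟨0, hn⟩ : Fin n) → x i = y i) →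
      (F x = F y ↔ x ⟨0, hn⟩ = y ⟨0, hn⟩)) :
    ∃ H : Fin n → Set Ordinal, (∀ i, H i ⊆ A i) ∧ (∀ i, H i ∈ U i) ∧
      ∀ x y : Fin n → Ordinal, StrictMono x → (∀ i, x i ∈ H i) →
        StrictMono y → (∀ i, y i ∈ H i) →
        (F x = F y ↔ (x ⟨0, hn⟩ = y ⟨0, hn⟩ ∧ ∀ i ∈ I', x i = y i)) := by

  classical
  obtain ⟨Ab, hAbU, hAbA, hAbinv, hAblow, hAbdisj⟩ := NM.preprocess hκ hU A hA
  obtain ⟨H, hHU, hHAb, hHinv, hHhom⟩ :=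
    NM.homogAll hκ hU F (Finset.univ : Finset (NM.PatIdx n)).toList Ab hAbU hAbinv
  have hHA : ∀ i, H i ⊆ A i := fun i => (hHAb i).trans (hAbA i)
  refine ⟨H, hHA, hHU, ?_⟩
  intro x y hx hxm hy hym
  have hlow : ∀ i j, κ j < κ i → ∀ c ∈ H i, κ j ≤ c :=
    fun i j h c hc => hAblow i j h c (hHAb i hc)
  have hdisj : ∀ i j, U i ≠ U j → H i ∩ H j = ∅ := by
    intro i j h
    apply Set.eq_empty_of_subset_empty
    rw [← hAbdisj i j h]
    exact Set.inter_subset_inter (hHAb i) (hHAb j)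
  have hhom : ∀ σ : NM.PatIdx n, NM.Homog F H σ :=
    fun σ => hHhom σ (Finset.mem_toList.mpr (Finset.mem_univ σ))
  have hxmA : ∀ i, x i ∈ A i := fun i => hHA i (hxm i)
  have hymA : ∀ i, y i ∈ A i := fun i => hHA i (hym i)
  constructor
  · intro hF
    have h00 : x ⟨0, hn⟩ = y ⟨0, hn⟩ := by
      rcases lt_trichotomy (x ⟨0, hn⟩) (y ⟨0, hn⟩) with h | h | h
      · exact (NM.no_bad hn hκ hU H hHU hHA hHinv hlow hdisj hhom h2
          x y hx hxm hy hym hF h).elim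
      · exact h
      · exact (NM.no_bad hn hκ hU H hHU hHA hHinv hlow hdisj hhom h2
          y x hy hym hx hxm hF.symm h).elim
    exact ⟨h00, (h1 x y hx hxmA hy hymA h00).mp hF⟩
  · rintro ⟨h00, hI⟩
    exact (h1 x y hx hxmA hy hymA h00).mpr hI
end

section
/- Let κ be an inaccessible cardinal and let E be a dense open subset of the Cohen forcing Cohen(κ,2). Then there exists a dense subset E* of Cohen(κ,2) with E* ⊆ E such that for every condition p ∈ E*, every inaccessible cardinal τ < κ with τ ∈ dom(p), and every total function q : τ → {0,1}, the condition whose domain is τ ∪ (dom(p) \ τ), agreeing with q on τ and with p on dom(p) \ τ, also belongs to E*. -/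
/-- A condition in the Cohen forcing `Cohen(κ,2)`: a partial function from `κ` to `2`
(encoded via `Option Bool`) whose domain has cardinality less than `κ`. -/
def IsCohenCond (κ : Ordinal.{0}) (p : Ordinal.{0} → Option Bool) : Prop :=
  (∀ α, p α ≠ none → α < κ) ∧
  Cardinal.mk {α : Ordinal.{0} // p α ≠ none} < Cardinal.lift.{1} κ.card

/-- `q` extends (is stronger than) `p`: `p ⊆ q` as partial functions. -/
def CohenLE (p q : Ordinal.{0} → Option Bool) : Prop :=
  ∀ α b, p α = some b → q α = some b

/-- `D` is dense in `Cohen(κ,2)`: every condition has an extension in `D`. -/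
def CohenDense (κ : Ordinal.{0}) (D : Set (Ordinal.{0} → Option Bool)) : Prop :=
  ∀ p, IsCohenCond κ p → ∃ q, IsCohenCond κ q ∧ CohenLE p q ∧ q ∈ D

/-- `D` is open in `Cohen(κ,2)`: closed upward under extension of conditions. -/
def CohenOpen (κ : Ordinal.{0}) (D : Set (Ordinal.{0} → Option Bool)) : Prop :=
  ∀ p q, p ∈ D → IsCohenCond κ q → CohenLE p q → q ∈ D

/-- `κ` is (the ordinal of) a strongly inaccessible cardinal. -/
def OrdIsInaccessible (κ : Ordinal.{0}) : Prop :=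
  κ.card.IsInaccessible ∧ κ.card.ord = κ

noncomputable section StmtSeven

open Cardinal Set

abbrev Cond : Type 1 := Ordinal.{0} → Option Bool

/-- mixing: replace `p` below `τ` by the total function `q`. -/
def cmix (q : Ordinal.{0} → Bool) (τ : Ordinal.{0}) (p : Cond) : Cond :=
  fun α => if α < τ then some (q α) else p α

variable {κ : Ordinal.{0}}

theorem kappa_aleph0 (hκ : OrdIsInaccessible κ) : ℵ₀ ≤ κ.card := hκ.1.1.le

theorem kappa_limit (hκ : OrdIsInaccessible κ) : Order.IsSuccLimit κ := by
  have := Cardinal.isSuccLimit_ord (kappa_aleph0 hκ)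
  rwa [hκ.2] at this

theorem card_lt_of_lt (hκ : OrdIsInaccessible κ) {τ : Ordinal.{0}} (h : τ < κ) :
    τ.card < κ.card := by
  rw [← hκ.2] at h; exact Cardinal.lt_ord.mp h

theorem mk_Iio_lt (hκ : OrdIsInaccessible κ) {τ : Ordinal.{0}} (h : τ < κ) :
    #(Set.Iio τ) < Cardinal.lift.{1} κ.card := by
  rw [Ordinal.mk_Iio_ordinal]
  exact Cardinal.lift_lt.mpr (card_lt_of_lt hκ h)

theorem mk_lt_of_subset_union {S A B : Set Ordinal.{0}} (hκ : OrdIsInaccessible κ)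
    (h : S ⊆ A ∪ B) (hA : #A < Cardinal.lift.{1} κ.card)
    (hB : #B < Cardinal.lift.{1} κ.card) : #S < Cardinal.lift.{1} κ.card :=
  lt_of_le_of_lt ((Cardinal.mk_le_mk_of_subset h).trans (Cardinal.mk_union_le A B))
    (Cardinal.add_lt_of_lt (Cardinal.aleph0_le_lift.mpr (kappa_aleph0 hκ)) hA hB)

theorem cond_card_helper {p : Cond} {A B : Set Ordinal.{0}} (hκ : OrdIsInaccessible κ)
    (h : ∀ α, p α ≠ none → α ∈ A ∪ B) (hA : #A < Cardinal.lift.{1} κ.card)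
    (hB : #B < Cardinal.lift.{1} κ.card) :
    Cardinal.mk {α : Ordinal.{0} // p α ≠ none} < Cardinal.lift.{1} κ.card :=
  mk_lt_of_subset_union hκ (fun α hα => h α hα) hA hB

/-- The key bounding lemma: fewer than `κ` many ordinals below `κ` are bounded below `κ`. -/
theorem exists_bound (hκ : OrdIsInaccessible κ) {ι : Type 1}
    (hι : #ι < Cardinal.lift.{1} κ.card) (f : ι → Ordinal.{0}) (hf : ∀ i, f i < κ) :
    ∃ δ, δ < κ ∧ ∀ i, f i < δ := by
  obtain ⟨a, ha⟩ := Cardinal.mem_range_lift_of_le hι.le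
  have hlt : a < κ.card := by
    rw [← Cardinal.lift_lt.{0,1}, ha]; exact hι
  have hne : Nonempty (ι ≃ Quotient.out a) := by
    rw [← Cardinal.lift_mk_eq'.{1,0}]
    rw [Cardinal.mk_out a, Cardinal.lift_id', ha]
  obtain ⟨e⟩ := hne
  set g : Quotient.out a → Ordinal.{0} := fun i => f (e.symm i) with hg
  have hsup : iSup g < κ := by
    have := Cardinal.iSup_lt_ord_of_isRegular (f := g) hκ.1.isRegular
      (by rw [Cardinal.mk_out a]; exact hlt) (fun i => by rw [hκ.2]; exact hf _)
    rwa [hκ.2] at this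
  refine ⟨iSup g + 1, ?_, ?_⟩
  · rw [Ordinal.add_one_eq_succ]
    exact (kappa_limit hκ).succ_lt hsup
  · intro i
    have h1 : f i ≤ iSup g := by
      have h2 : f i = g (e i) := by simp [hg]
      rw [h2]; exact Ordinal.le_iSup g (e i)
    exact lt_of_le_of_lt h1 (lt_add_one _)

/-- A variant of `exists_bound` for the domain of a condition. -/
theorem exists_dom_bound (hκ : OrdIsInaccessible κ) {p : Cond} (hp : IsCohenCond κ p) :
    ∃ δ, δ < κ ∧ ∀ α, p α ≠ none → α < δ := by
  obtain ⟨δ, hδ, hb⟩ := exists_bound hκ hp.2 (fun u => u.1) (fun u => hp.1 u.1 u.2)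
  exact ⟨δ, hδ, fun α hα => hb ⟨α, hα⟩⟩

/-- The type of tasks: an inaccessible `τ < κ` together with a total function below `τ`. -/
def CTask (κ : Ordinal.{0}) : Type 1 :=
  Σ' τ : {o : Ordinal.{0} // o < κ ∧ OrdIsInaccessible o}, (↥(Set.Iio τ.1) → Bool)

def TRel (κ : Ordinal.{0}) : CTask κ → CTask κ → Prop :=
  PSigma.Lex (fun a b => a.1 < b.1) (fun _ => WellOrderingRel)

theorem trel_wf (κ : Ordinal.{0}) : WellFounded (TRel κ) :=
  WellFounded.psigma_lex (InvImage.wf Subtype.val Ordinal.lt_wf)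
    (fun _ => IsWellFounded.wf)

theorem le_of_trel {w' w : CTask κ} (h : TRel κ w' w) : w'.1.1 ≤ w.1.1 := by
  cases h with
  | left _ _ h => exact h.le
  | right _ _ => exact le_rfl

theorem trel_tri (w w' : CTask κ) : TRel κ w w' ∨ w = w' ∨ TRel κ w' w := by
  obtain ⟨⟨τ, hτ⟩, q⟩ := w
  obtain ⟨⟨τ', hτ'⟩, q'⟩ := w'
  rcases lt_trichotomy τ τ' with h | h | h
  · exact Or.inl (PSigma.Lex.left _ _ h)
  · subst h
    rcases trichotomous_of WellOrderingRel q q' with h | h | h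
    · exact Or.inl (PSigma.Lex.right _ h)
    · exact Or.inr (Or.inl (by rw [h]))
    · exact Or.inr (Or.inr (PSigma.Lex.right _ h))
  · exact Or.inr (Or.inr (PSigma.Lex.left _ _ h))

theorem mk_tasks_lt (hκ : OrdIsInaccessible κ) {β : Ordinal.{0}} (hβ : β < κ) :
    #{w : CTask κ // w.1.1 ≤ β} < Cardinal.lift.{1} κ.card := by
  have hβ1 : β + 1 < κ := by
    rw [Ordinal.add_one_eq_succ]; exact (kappa_limit hκ).succ_lt hβ
  set A : Set Ordinal.{0} := Set.Iio (β + 1) with hA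
  set J : {w : CTask κ // w.1.1 ≤ β} → (↥A × (↥A → Bool)) := fun u =>
    (⟨u.1.1.1, lt_of_le_of_lt u.2 (lt_add_one β)⟩,
      fun x => if h : x.1 < u.1.1.1 then u.1.2 ⟨x.1, h⟩ else false) with hJ
  have hinj : Function.Injective J := by
    rintro ⟨⟨⟨τ, hτ⟩, q⟩, hu⟩ ⟨⟨⟨τ', hτ'⟩, q'⟩, hu'⟩ h
    simp only [hJ, Prod.mk.injEq, Subtype.mk.injEq] at h
    obtain ⟨h1, h2⟩ := h
    replace h1 := congrArg Subtype.val h1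
    subst h1
    have hq : q = q' := by
      funext x
      obtain ⟨α, hα⟩ := x
      have hα' : α < τ := hα
      have h3 := congrFun h2 ⟨α, lt_trans hα' (lt_of_le_of_lt hu (lt_add_one β))⟩
      simpa only [dif_pos hα'] using h3
    subst hq
    rfl
  have hcard : #{w : CTask κ // w.1.1 ≤ β} ≤ #(↥A × (↥A → Bool)) :=
    Cardinal.mk_le_of_injective hinj
  have hAcard : #↥A = Cardinal.lift.{1} (β+1).card := Ordinal.mk_Iio_ordinal (β+1)
  have hAlt : #↥A < Cardinal.lift.{1} κ.card := by
    rw [hAcard]; exact Cardinal.lift_lt.mpr (card_lt_of_lt hκ hβ1)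
  have hFlt : #(↥A → Bool) < Cardinal.lift.{1} κ.card := by
    rw [Cardinal.mk_arrow, Cardinal.mk_bool, Cardinal.lift_id', hAcard,
      ← Cardinal.lift_power]
    exact Cardinal.lift_lt.mpr (hκ.1.isStrongPrelimit (card_lt_of_lt hκ hβ1))
  refine lt_of_le_of_lt hcard ?_
  rw [Cardinal.mk_prod, Cardinal.lift_id, Cardinal.lift_id]
  exact Cardinal.mul_lt_of_lt (Cardinal.aleph0_le_lift.mpr (kappa_aleph0 hκ)) hAlt hFlt

theorem mk_preds_lt (hκ : OrdIsInaccessible κ) (w : CTask κ) :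
    #{w' : CTask κ // TRel κ w' w} < Cardinal.lift.{1} κ.card := by
  refine lt_of_le_of_lt (Cardinal.mk_le_of_injective
    (f := fun u : {w' : CTask κ // TRel κ w' w} =>
      (⟨u.1, le_of_trel u.2⟩ : {w' : CTask κ // w'.1.1 ≤ w.1.1})) ?_)
    (mk_tasks_lt hκ w.1.2.1)
  intro u u' h
  exact Subtype.ext (congrArg (fun x : {w' : CTask κ // w'.1.1 ≤ w.1.1} => x.val) h)

section Build

variable (κ) (ext : Cond → Cond) (pE : Cond)

def taskFun (w : CTask κ) : Ordinal.{0} → Bool :=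
  fun α => if hα : α < w.1.1 then w.2 ⟨α, hα⟩ else false

def bbase (w : CTask κ) (v : {w' : CTask κ // TRel κ w' w} → Cond) : Cond :=
  fun α => @dite _ (∃ u, v u α ≠ none) (Classical.dec _) (fun h => v h.choose α) (fun _ => pE α)

def bstep (w : CTask κ) (v : {w' : CTask κ // TRel κ w' w} → Cond) : Cond :=
  fun α => if α < w.1.1 then bbase κ pE w v α
           else ext (cmix (taskFun κ w) w.1.1 (bbase κ pE w v)) α

def bval : CTask κ → Cond :=
  (trel_wf κ).fix (fun w ih => bstep κ ext pE w (fun u => ih u.1 u.2))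

theorem bval_eq (w : CTask κ) :
    bval κ ext pE w = bstep κ ext pE w (fun u => bval κ ext pE u.1) :=
  WellFounded.fix_eq _ _ _

end Build

section Invariant

variable (ext : Cond → Cond) (pE : Cond) (E : Set Cond)

/-- The inductive invariant of the construction. -/
def BINV (w : CTask κ) : Prop :=
  IsCohenCond κ (bval κ ext pE w) ∧
  CohenLE pE (bval κ ext pE w) ∧
  (∀ w', TRel κ w' w → CohenLE (bval κ ext pE w') (bval κ ext pE w)) ∧
  (∃ δ, δ < κ ∧ ∀ α, bval κ ext pE w α ≠ none → pE α ≠ none ∨ α < δ) ∧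
  (∀ qq : Ordinal.{0} → Bool, (∀ α (h : α < w.1.1), qq α = w.2 ⟨α, h⟩) →
      cmix qq w.1.1 (bval κ ext pE w) ∈ E)

variable {ext pE E}

theorem binv_all (hκ : OrdIsInaccessible κ) (hEopen : CohenOpen κ E)
    (hext1 : ∀ p, IsCohenCond κ p → IsCohenCond κ (ext p))
    (hext2 : ∀ p, IsCohenCond κ p → CohenLE p (ext p))
    (hext3 : ∀ p, IsCohenCond κ p → ext p ∈ E)
    (hpE : IsCohenCond κ pE) :
    ∀ w : CTask κ, BINV ext pE E w := by
  intro w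
  induction w using (trel_wf κ).induction with
  | _ w ih =>
  set τ : Ordinal.{0} := w.1.1 with hτdef
  have hτκ : τ < κ := w.1.2.1
  set v : {w' : CTask κ // TRel κ w' w} → Cond := fun u => bval κ ext pE u.1 with hv
  have hbase_pos : ∀ α (h : ∃ u, v u α ≠ none), bbase κ pE w v α = v h.choose α :=
    fun α h => dif_pos h
  have hbase_neg : ∀ α, ¬(∃ u, v u α ≠ none) → bbase κ pE w v α = pE α :=
    fun α h => dif_neg h
  have hvcond : ∀ u, IsCohenCond κ (v u) := fun u => (ih u.1 u.2).1
  have hvpe : ∀ u, CohenLE pE (v u) := fun u => (ih u.1 u.2).2.1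
  -- any two predecessor values agree
  have hagree : ∀ (u u' : {w' : CTask κ // TRel κ w' w}) α b b',
      v u α = some b → v u' α = some b' → b = b' := by
    intro u u' α b b' h h'
    rcases trel_tri u.1 u'.1 with ht | ht | ht
    · have h2 := (ih u'.1 u'.2).2.2.1 u.1 ht α b h
      exact (Option.some.inj (h'.symm.trans h2)).symm
    · have h2 : bval κ ext pE u.1 α = bval κ ext pE u'.1 α := by rw [ht]
      exact Option.some.inj ((h.symm.trans (h2.trans h')).symm).symm
    · have h2 := (ih u.1 u.2).2.2.1 u'.1 ht α b' h'
      exact Option.some.inj (h.symm.trans h2)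
  have hbase_pred : ∀ u, CohenLE (v u) (bbase κ pE w v) := by
    intro u α b hb
    have hex : ∃ u', v u' α ≠ none := ⟨u, by rw [hb]; exact Option.some_ne_none b⟩
    rw [hbase_pos α hex]
    obtain ⟨b', hb'⟩ := Option.ne_none_iff_exists'.mp hex.choose_spec
    rw [hb']
    exact congrArg some (hagree _ _ _ _ _ hb' hb)
  have hbase_pE : CohenLE pE (bbase κ pE w v) := by
    intro α b hb
    by_cases hex : ∃ u', v u' α ≠ none
    · rw [hbase_pos α hex]; exact hvpe hex.choose α b hb
    · rw [hbase_neg α hex]; exact hb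
  have hbase_κ : ∀ α, bbase κ pE w v α ≠ none → α < κ := by
    intro α hα
    by_cases hex : ∃ u', v u' α ≠ none
    · rw [hbase_pos α hex] at hα; exact (hvcond hex.choose).1 α hα
    · rw [hbase_neg α hex] at hα; exact hpE.1 α hα
  have hbase_bdd : ∃ δ, δ < κ ∧
      ∀ α, bbase κ pE w v α ≠ none → pE α ≠ none ∨ α < δ := by
    have hch : ∀ u : {w' : CTask κ // TRel κ w' w}, ∃ δ, δ < κ ∧
        ∀ α, v u α ≠ none → pE α ≠ none ∨ α < δ := fun u => (ih u.1 u.2).2.2.2.1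
    choose δf hδf1 hδf2 using hch
    obtain ⟨δ, hδκ, hδ⟩ := exists_bound hκ (mk_preds_lt hκ w) δf hδf1
    refine ⟨δ, hδκ, ?_⟩
    intro α hα
    by_cases hex : ∃ u', v u' α ≠ none
    · rw [hbase_pos α hex] at hα
      rcases hδf2 hex.choose α hα with h | h
      · exact Or.inl h
      · exact Or.inr (lt_trans h (hδ _))
    · rw [hbase_neg α hex] at hα; exact Or.inl hα
  obtain ⟨δb, hδbκ, hδb⟩ := hbase_bdd
  have hbase_cond : IsCohenCond κ (bbase κ pE w v) := by
    refine ⟨hbase_κ, cond_card_helper hκ (A := {α | pE α ≠ none}) (B := Set.Iio δb)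
      ?_ hpE.2 (mk_Iio_lt hκ hδbκ)⟩
    intro α hα
    rcases hδb α hα with h | h
    · exact Or.inl h
    · exact Or.inr h
  set m : Cond := cmix (taskFun κ w) τ (bbase κ pE w v) with hm
  have hm_def : ∀ α, m α = if α < τ then some (taskFun κ w α) else bbase κ pE w v α :=
    fun _ => rfl
  have hm_cond : IsCohenCond κ m := by
    constructor
    · intro α hα
      rw [hm_def] at hα
      by_cases hατ : α < τ
      · exact lt_trans hατ hτκ
      · rw [if_neg hατ] at hα; exact hbase_κ α hα
    · refine cond_card_helper hκ (A := Set.Iio τ) (B := {α | bbase κ pE w v α ≠ none})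
        ?_ (mk_Iio_lt hκ hτκ) hbase_cond.2
      intro α hα
      rw [hm_def] at hα
      by_cases hατ : α < τ
      · exact Or.inl hατ
      · rw [if_neg hατ] at hα; exact Or.inr hα
  set e : Cond := ext m with he
  have he_cond : IsCohenCond κ e := hext1 _ hm_cond
  have he_le : CohenLE m e := hext2 _ hm_cond
  have he_mem : e ∈ E := hext3 _ hm_cond
  have hbv : ∀ α, bval κ ext pE w α = if α < τ then bbase κ pE w v α else e α := by
    intro α
    rw [bval_eq]
    rfl
  have hc_cond : IsCohenCond κ (bval κ ext pE w) := by
    constructor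
    · intro α hα
      rw [hbv] at hα
      by_cases hατ : α < τ
      · rw [if_pos hατ] at hα; exact hbase_κ α hα
      · rw [if_neg hατ] at hα; exact he_cond.1 α hα
    · refine cond_card_helper hκ (A := {α | bbase κ pE w v α ≠ none})
        (B := {α | e α ≠ none}) ?_ hbase_cond.2 he_cond.2
      intro α hα
      rw [hbv] at hα
      by_cases hατ : α < τ
      · rw [if_pos hατ] at hα; exact Or.inl hα
      · rw [if_neg hατ] at hα; exact Or.inr hα
  refine ⟨hc_cond, ?_, ?_, ?_, ?_⟩
  · -- extends pE
    intro α b hb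
    rw [hbv]
    by_cases hατ : α < τ
    · rw [if_pos hατ]; exact hbase_pE α b hb
    · rw [if_neg hατ]
      refine he_le α b ?_
      rw [hm_def, if_neg hατ]
      exact hbase_pE α b hb
  · -- extends predecessors
    intro w' hw' α b hb
    rw [hbv]
    by_cases hατ : α < τ
    · rw [if_pos hατ]; exact hbase_pred ⟨w', hw'⟩ α b hb
    · rw [if_neg hατ]
      refine he_le α b ?_
      rw [hm_def, if_neg hατ]
      exact hbase_pred ⟨w', hw'⟩ α b hb
  · -- bounded new domain
    obtain ⟨δe, hδeκ, hδe⟩ := exists_dom_bound hκ he_cond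
    refine ⟨max δb δe, max_lt hδbκ hδeκ, ?_⟩
    intro α hα
    rw [hbv] at hα
    by_cases hατ : α < τ
    · rw [if_pos hατ] at hα
      rcases hδb α hα with h | h
      · exact Or.inl h
      · exact Or.inr (lt_of_lt_of_le h (le_max_left _ _))
    · rw [if_neg hατ] at hα
      exact Or.inr (lt_of_lt_of_le (hδe α hα) (le_max_right _ _))
  · -- the task of `w` is handled
    intro qq hqq
    have hle : CohenLE e (cmix qq τ (bval κ ext pE w)) := by
      intro α b hb
      show (if α < τ then some (qq α) else bval κ ext pE w α) = some b
      by_cases hατ : α < τ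
      · rw [if_pos hατ]
        have hma : m α = some (taskFun κ w α) := by rw [hm_def, if_pos hατ]
        have := he_le α _ hma
        rw [this] at hb
        have hqv : qq α = taskFun κ w α := by
          rw [hqq α hατ]
          show _ = taskFun κ w α
          rw [taskFun]
          rw [dif_pos hατ]
        rw [hqv]
        exact hb
      · rw [if_neg hατ, hbv, if_neg hατ]
        exact hb
    have hcond : IsCohenCond κ (cmix qq τ (bval κ ext pE w)) := by
      constructor
      · intro α hα
        by_cases hατ : α < τ
        · exact lt_trans hατ hτκ
        · have : cmix qq τ (bval κ ext pE w) α = bval κ ext pE w α := if_neg hατ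
          rw [this] at hα
          exact hc_cond.1 α hα
      · refine cond_card_helper hκ (A := Set.Iio τ)
          (B := {α | bval κ ext pE w α ≠ none}) ?_ (mk_Iio_lt hκ hτκ) hc_cond.2
        intro α hα
        by_cases hατ : α < τ
        · exact Or.inl hατ
        · have : cmix qq τ (bval κ ext pE w) α = bval κ ext pE w α := if_neg hατ
          rw [this] at hα
          exact Or.inr hα
    exact hEopen e _ he_mem hcond hle

end Invariant

section Density

variable {E : Set Cond}

theorem estar_dense (hκ : OrdIsInaccessible κ)
    (hEdense : CohenDense κ E) (hEopen : CohenOpen κ E)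
    (p₀ : Cond) (hp₀ : IsCohenCond κ p₀) :
    ∃ r, IsCohenCond κ r ∧ CohenLE p₀ r ∧ r ∈ E ∧
      ∀ τ, τ < κ → OrdIsInaccessible τ → r τ ≠ none →
        ∀ q : Ordinal.{0} → Bool, cmix q τ r ∈ E := by
  classical
  -- a global extension-into-E operator
  have hch : ∀ p : Cond, ∃ q, IsCohenCond κ p →
      (IsCohenCond κ q ∧ CohenLE p q ∧ q ∈ E) := by
    intro p
    by_cases h : IsCohenCond κ p
    · exact (hEdense p h).imp fun q hq => fun _ => hq
    · exact ⟨p, fun h' => absurd h' h⟩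
  choose ext hext using hch
  have hext1 : ∀ p, IsCohenCond κ p → IsCohenCond κ (ext p) := fun p h => (hext p h).1
  have hext2 : ∀ p, IsCohenCond κ p → CohenLE p (ext p) := fun p h => (hext p h).2.1
  have hext3 : ∀ p, IsCohenCond κ p → ext p ∈ E := fun p h => (hext p h).2.2
  set pE : Cond := ext p₀ with hpEdef
  have hpE : IsCohenCond κ pE := hext1 p₀ hp₀
  have hpEle : CohenLE p₀ pE := hext2 p₀ hp₀
  have hpEmem : pE ∈ E := hext3 p₀ hp₀
  have hbinv : ∀ w : CTask κ, BINV ext pE E w :=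
    binv_all hκ hEopen hext1 hext2 hext3 hpE
  -- all values in the construction form a chain
  have hchain : ∀ (w w' : CTask κ) (α : Ordinal.{0}) (b b' : Bool),
      bval κ ext pE w α = some b → bval κ ext pE w' α = some b' → b = b' := by
    intro w w' α b b' h h'
    rcases trel_tri w w' with ht | ht | ht
    · have h2 := (hbinv w').2.2.1 w ht α b h
      exact Option.some.inj (h'.symm.trans h2).symm
    · subst ht
      exact Option.some.inj (h.symm.trans h')
    · have h2 := (hbinv w).2.2.1 w' ht α b' h'
      exact Option.some.inj (h.symm.trans h2)
  -- successive bounds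
  have hnext : ∀ β, β < κ → ∃ γ, γ < κ ∧ β < γ ∧
      ∀ w : CTask κ, w.1.1 ≤ β → ∀ α, bval κ ext pE w α ≠ none →
        pE α ≠ none ∨ α < γ := by
    intro β hβ
    have hch2 : ∀ u : {w : CTask κ // w.1.1 ≤ β}, ∃ δ, δ < κ ∧
        ∀ α, bval κ ext pE u.1 α ≠ none → pE α ≠ none ∨ α < δ :=
      fun u => (hbinv u.1).2.2.2.1
    choose δf hδf1 hδf2 using hch2
    obtain ⟨δ, hδκ, hδ⟩ := exists_bound hκ (mk_tasks_lt hκ hβ) δf hδf1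
    have hβ1 : β + 1 < κ := by
      rw [Ordinal.add_one_eq_succ]; exact (kappa_limit hκ).succ_lt hβ
    refine ⟨max (β+1) δ, max_lt hβ1 hδκ,
      lt_of_lt_of_le (lt_add_one β) (le_max_left _ _), ?_⟩
    intro w hw α hα
    rcases hδf2 ⟨w, hw⟩ α hα with h | h
    · exact Or.inl h
    · exact Or.inr (lt_of_lt_of_le (lt_trans h (hδ _)) (le_max_right _ _))
  obtain ⟨δ₀, hδ₀κ, hδ₀⟩ := exists_dom_bound hκ hpE
  -- the increasing sequence of bounds
  set g : ℕ → {o : Ordinal.{0} // o < κ} := fun n => Nat.rec ⟨δ₀, hδ₀κ⟩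
    (fun _ prev => ⟨(hnext prev.1 prev.2).choose, (hnext prev.1 prev.2).choose_spec.1⟩) n
    with hg
  have hgsucc : ∀ n : ℕ, (g (n+1)).1 = (hnext (g n).1 (g n).2).choose := fun n => rfl
  have hg2 : ∀ (n : ℕ) (w : CTask κ), w.1.1 ≤ (g n).1 →
      ∀ α, bval κ ext pE w α ≠ none → pE α ≠ none ∨ α < (g (n+1)).1 := by
    intro n
    have := (hnext (g n).1 (g n).2).choose_spec.2.2
    rw [← hgsucc n] at this
    exact this
  set lam : Ordinal.{0} := ⨆ n, (g n).1 with hlam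
  have hlamκ : lam < κ := by
    have := Cardinal.iSup_lt_ord_of_isRegular (f := fun n => (g n).1) hκ.1.isRegular
      (by rw [Cardinal.mk_nat]; exact hκ.1.1) (fun n => by rw [hκ.2]; exact (g n).2)
    rwa [hκ.2] at this
  have hglam : ∀ n, (g n).1 ≤ lam := fun n => Ordinal.le_iSup (fun n => (g n).1) n
  -- the final condition
  set r : Cond := fun α => @dite _ (∃ w : CTask κ, w.1.1 < lam ∧ bval κ ext pE w α ≠ none)
    (Classical.dec _) (fun h => bval κ ext pE h.choose α) (fun _ => pE α) with hr
  have hr_pos : ∀ (α : Ordinal.{0}) (h : ∃ w : CTask κ, w.1.1 < lam ∧ bval κ ext pE w α ≠ none),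
      r α = bval κ ext pE h.choose α := fun α h => dif_pos h
  have hr_neg : ∀ (α : Ordinal.{0}), ¬(∃ w : CTask κ, w.1.1 < lam ∧ bval κ ext pE w α ≠ none) →
      r α = pE α := fun α h => dif_neg h
  have hrge : ∀ w : CTask κ, w.1.1 < lam → CohenLE (bval κ ext pE w) r := by
    intro w hw α b hb
    have hex : ∃ w' : CTask κ, w'.1.1 < lam ∧ bval κ ext pE w' α ≠ none :=
      ⟨w, hw, by rw [hb]; exact Option.some_ne_none b⟩
    rw [hr_pos α hex]
    obtain ⟨b', hb'⟩ := Option.ne_none_iff_exists'.mp hex.choose_spec.2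
    rw [hb']
    exact congrArg some (hchain _ _ _ _ _ hb' hb)
  have hrpe : CohenLE pE r := by
    intro α b hb
    by_cases hex : ∃ w : CTask κ, w.1.1 < lam ∧ bval κ ext pE w α ≠ none
    · rw [hr_pos α hex]
      exact (hbinv hex.choose).2.1 α b hb
    · rw [hr_neg α hex]; exact hb
  have hrdom : ∀ α, r α ≠ none → α < lam := by
    intro α hα
    by_cases hex : ∃ w : CTask κ, w.1.1 < lam ∧ bval κ ext pE w α ≠ none
    · rw [hr_pos α hex] at hα
      obtain ⟨n, hn⟩ := Ordinal.lt_iSup_iff.mp hex.choose_spec.1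
      rcases hg2 n hex.choose hn.le α hα with h | h
      · exact lt_of_lt_of_le (hδ₀ α h) (hglam 0)
      · exact lt_of_lt_of_le h (hglam (n+1))
    · rw [hr_neg α hex] at hα
      exact lt_of_lt_of_le (hδ₀ α hα) (hglam 0)
  have hrcond : IsCohenCond κ r := by
    constructor
    · exact fun α hα => lt_trans (hrdom α hα) hlamκ
    · refine cond_card_helper hκ (A := Set.Iio lam) (B := ∅) ?_ (mk_Iio_lt hκ hlamκ) ?_
      · intro α hα
        exact Or.inl (hrdom α hα)
      · rw [Cardinal.mk_emptyCollection]
        exact lt_of_lt_of_le Cardinal.aleph0_pos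
          (Cardinal.aleph0_le_lift.mpr (kappa_aleph0 hκ))
  have hrE : r ∈ E := hEopen pE r hpEmem hrcond hrpe
  refine ⟨r, hrcond, fun α b hb => hrpe α b (hpEle α b hb), hrE, ?_⟩
  intro τ hτκ hτin hτdom q
  have hτlam : τ < lam := hrdom τ hτdom
  set w : CTask κ := ⟨⟨τ, hτκ, hτin⟩, fun x => q x.1⟩ with hw
  have hhand := (hbinv w).2.2.2.2 q (fun α h => rfl)
  have hle : CohenLE (cmix q τ (bval κ ext pE w)) (cmix q τ r) := by
    intro α b hb
    by_cases hατ : α < τ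
    · have h1 : cmix q τ (bval κ ext pE w) α = some (q α) := if_pos hατ
      have h2 : cmix q τ r α = some (q α) := if_pos hατ
      rw [h2, ← h1, hb]
    · have h1 : cmix q τ (bval κ ext pE w) α = bval κ ext pE w α := if_neg hατ
      have h2 : cmix q τ r α = r α := if_neg hατ
      rw [h2]
      rw [h1] at hb
      exact hrge w hτlam α b hb
  have hcond2 : IsCohenCond κ (cmix q τ r) := by
    constructor
    · intro α hα
      by_cases hατ : α < τ
      · exact lt_trans hατ hτκ
      · have h2 : cmix q τ r α = r α := if_neg hατ
        rw [h2] at hα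
        exact hrcond.1 α hα
    · refine cond_card_helper hκ (A := Set.Iio τ) (B := {α | r α ≠ none}) ?_
        (mk_Iio_lt hκ hτκ) hrcond.2
      intro α hα
      by_cases hατ : α < τ
      · exact Or.inl hατ
      · have h2 : cmix q τ r α = r α := if_neg hατ
        rw [h2] at hα
        exact Or.inr hα
  exact hEopen _ _ hhand hcond2 hle

end Density

end StmtSeven

/-- Claim 2 of Theorem 7.1: every dense open subset `E` of `Cohen(κ,2)` contains a dense
subset `E*` closed under replacing a condition below any inaccessible `τ ∈ dom(p)` by an
arbitrary total function `q : τ → 2`. -/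
theorem stmt_7 (κ : Ordinal.{0}) (hκ : OrdIsInaccessible κ)
    (E : Set (Ordinal.{0} → Option Bool))
    (hE : ∀ p ∈ E, IsCohenCond κ p)
    (hEdense : CohenDense κ E) (hEopen : CohenOpen κ E) :
    ∃ Estar : Set (Ordinal.{0} → Option Bool),
      Estar ⊆ E ∧ CohenDense κ Estar ∧
      ∀ p ∈ Estar, ∀ τ : Ordinal.{0}, τ < κ → OrdIsInaccessible τ → p τ ≠ none →
        ∀ q : Ordinal.{0} → Bool,
          (fun α => if α < τ then some (q α) else p α) ∈ Estar := by
  classical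
  refine ⟨{p | IsCohenCond κ p ∧ p ∈ E ∧ ∀ τ, τ < κ → OrdIsInaccessible τ → p τ ≠ none →
      ∀ q : Ordinal.{0} → Bool, cmix q τ p ∈ E}, ?_, ?_, ?_⟩
  · intro p hp
    exact hp.2.1
  · intro p hp
    obtain ⟨r, h1, h2, h3, h4⟩ := estar_dense hκ hEdense hEopen p hp
    exact ⟨r, h1, h2, h1, h3, h4⟩
  · rintro p ⟨hpc, hpEmem, hprop⟩ τ hτκ hτin hτdom q
    show cmix q τ p ∈ _
    have hmixcond : ∀ (q' : Ordinal.{0} → Bool) (τ' : Ordinal.{0}), τ' < κ →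
        IsCohenCond κ p → IsCohenCond κ (cmix q' τ' p) := by
      intro q' τ' hτ' hpc'
      constructor
      · intro α hα
        by_cases hατ : α < τ'
        · exact lt_trans hατ hτ'
        · have h2 : cmix q' τ' p α = p α := if_neg hατ
          rw [h2] at hα
          exact hpc'.1 α hα
      · refine cond_card_helper hκ (A := Set.Iio τ') (B := {α | p α ≠ none}) ?_
          (mk_Iio_lt hκ hτ') hpc'.2
        intro α hα
        by_cases hατ : α < τ'
        · exact Or.inl hατ
        · have h2 : cmix q' τ' p α = p α := if_neg hατ
          rw [h2] at hα
          exact Or.inr hα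
    refine ⟨hmixcond q τ hτκ hpc, hprop τ hτκ hτin hτdom q, ?_⟩
    intro τ' hτ'κ hτ'in hdom' q'
    rcases le_or_gt τ τ' with hle | hlt
    · have heq : cmix q' τ' (cmix q τ p) = cmix q' τ' p := by
        funext α
        show (if α < τ' then some (q' α) else cmix q τ p α) =
          (if α < τ' then some (q' α) else p α)
        by_cases hατ' : α < τ'
        · rw [if_pos hατ', if_pos hατ']
        · rw [if_neg hατ', if_neg hατ']
          exact if_neg (fun h => hατ' (lt_of_lt_of_le h hle))
      rw [heq]
      refine hprop τ' hτ'κ hτ'in ?_ q'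
      have h2 : cmix q τ p τ' = p τ' := if_neg (fun h => absurd hle (not_le.mpr h))
      rw [h2] at hdom'
      exact hdom'
    · have heq : cmix q' τ' (cmix q τ p) = cmix (fun α => if α < τ' then q' α else q α) τ p := by
        funext α
        show (if α < τ' then some (q' α) else cmix q τ p α) =
          (if α < τ then some (if α < τ' then q' α else q α) else p α)
        by_cases hατ' : α < τ'
        · rw [if_pos hατ', if_pos (lt_trans hατ' hlt), if_pos hατ']
        · rw [if_neg hατ']
          by_cases hατ : α < τ
          · have h1 : cmix q τ p α = some (q α) := if_pos hατ
            rw [h1, if_pos hατ, if_neg hατ']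
          · have h1 : cmix q τ p α = p α := if_neg hατ
            rw [h1, if_neg hατ]
      rw [heq]
      exact hprop τ hτκ hτin hτdom _
end
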